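/- arXiv:2105.05205 — 5 statements merged into one kernel-verified Lean document; each statement's English description precedes it below -/
import Mathlib

section
/- Let (W,S) be a right-angled Coxeter system, s ∈ S, and w ∈ W with w not in the centralizer C_W(s). Then for every v ∈ W, if s ≤ w and s ≤ v then both w ≰ s·v and s·w ≰ v hold, where ≤ is the weak right Bruhat order. -/
/-- The weak right Bruhat order: `startsWith v w` iff `w` starts with `v`. -/
def CoxeterSystem.startsWith {B W : Type*} [Group W] {M : CoxeterMatrix B}
    (cs : CoxeterSystem M W) (v w : W) : Prop :=
  cs.length v + cs.length (v⁻¹ * w) = cs.length w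


open CoxeterSystem List

namespace SWAux

variable {B W : Type*} [Group W] {M : CoxeterMatrix B} (cs : CoxeterSystem M W)

local prefix:100 "s" => cs.simple
local prefix:100 "π" => cs.wordProd
local prefix:100 "ℓ" => cs.length
local prefix:100 "lis" => cs.leftInvSeq
local prefix:100 "ris" => cs.rightInvSeq

lemma comm_of_two {i j : B} (h : M i j = 2) : Commute (s i) (s j) := by
  have h2 := cs.simple_mul_simple_pow i j
  rw [h, pow_two] at h2
  have : s i * s j = (s i * s j)⁻¹ := eq_inv_of_mul_eq_one_left h2
  rw [mul_inv_rev, inv_simple, inv_simple] at this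
  exact this

lemma startsWith_trans {a b c : W} (h1 : cs.startsWith a b) (h2 : cs.startsWith b c) :
    cs.startsWith a c := by
  unfold CoxeterSystem.startsWith at *
  have t1 : ℓ (a⁻¹ * c) ≤ ℓ (a⁻¹ * b) + ℓ (b⁻¹ * c) := by
    have := cs.length_mul_le (a⁻¹ * b) (b⁻¹ * c)
    rwa [show a⁻¹ * b * (b⁻¹ * c) = a⁻¹ * c by group] at this
  have t2 : ℓ c ≤ ℓ a + ℓ (a⁻¹ * c) := by
    have := cs.length_mul_le a (a⁻¹ * c)
    rwa [show a * (a⁻¹ * c) = c by group] at this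
  omega

open scoped Classical

variable (hra : ∀ i j : B, i ≠ j → M i j = 2 ∨ M i j = 0)

/-- helper: every element of `Multiplicative (ZMod 2)` squares to one. -/
lemma mzmod2_sq (g : Multiplicative (ZMod 2)) : g * g = 1 := by
  have h : ∀ x : ZMod 2, x + x = 0 := by decide
  calc g * g = Multiplicative.ofAdd (Multiplicative.toAdd g + Multiplicative.toAdd g) := rfl
    _ = 1 := by rw [h]; rfl

/-- The `c`-parity homomorphism: counts occurrences of the letter `c` mod 2. -/
noncomputable def theta (c : B) : W →* Multiplicative (ZMod 2) :=
  cs.lift ⟨fun i => Multiplicative.ofAdd (if i = c then 1 else 0), by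
    intro i j
    rcases eq_or_ne i j with rfl | hij
    · rw [M.diagonal i, pow_one]; exact mzmod2_sq _
    · rcases hra i j hij with h2 | h0
      · rw [h2, pow_two]
        rw [show (Multiplicative.ofAdd (if i = c then (1:ZMod 2) else 0) *
            Multiplicative.ofAdd (if j = c then (1:ZMod 2) else 0)) = Multiplicative.ofAdd
            ((if i = c then (1:ZMod 2) else 0) + (if j = c then (1:ZMod 2) else 0)) from rfl]
        exact mzmod2_sq _
      · rw [h0, pow_zero]⟩

lemma theta_simple (c i : B) :
    theta cs hra c (s i) = Multiplicative.ofAdd (if i = c then 1 else 0) :=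
  cs.lift_apply_simple _ i

lemma theta_conj (c : B) (g h : W) : theta cs hra c (g * h * g⁻¹) = theta cs hra c h := by
  rw [map_mul, map_mul, map_inv, mul_comm, ← mul_assoc]
  simp

include hra in
/-- From `P * s d * P⁻¹ = s b`, conclude `d = b`. -/
lemma letter_eq_of_conj_eq {P : W} {d b : B} (h : P * s d * P⁻¹ = s b) : d = b := by
  by_contra hdb
  have h2 := theta_conj cs hra b P (s d)
  rw [h, theta_simple, theta_simple, if_pos rfl, if_neg hdb] at h2
  have h3 : (1 : ZMod 2) = 0 := congrArg Multiplicative.toAdd h2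
  simp at h3

lemma zmod2_four (x u v : ZMod 2) : x + u + v + u + v = x := by
  revert x u v; decide

lemma sandwich {u : W} (hu : u * u = 1) (x : W) : u * (u * x * u) * u = x := by
  rw [show u * (u * x * u) * u = (u * u) * (x * (u * u)) by group, hu, one_mul, mul_one]

lemma sandwich_iff {u : W} (hu : u * u = 1) (x y : W) :
    u * x * u = y ↔ x = u * y * u := by
  constructor
  · intro h; rw [← h]; exact (sandwich hu x).symm
  · intro h; rw [h]; exact sandwich hu y

/-- underlying function of the reflection-counting permutation -/
noncomputable def sigmaFun (i : B) : W × ZMod 2 → W × ZMod 2 :=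
  fun p => (s i * p.1 * s i, p.2 + if p.1 = s i then 1 else 0)

lemma sigmaFun_invol (i : B) : Function.Involutive (sigmaFun cs i) := by
  intro p
  unfold sigmaFun
  have hsq : s i * s i = 1 := cs.simple_mul_simple_self i
  have hc : (s i * p.1 * s i = s i) ↔ (p.1 = s i) := by
    rw [sandwich_iff hsq, show (s i) * s i * s i = s i by rw [hsq, one_mul]]
  refine Prod.ext ?_ ?_
  · exact sandwich hsq p.1
  · simp only [hc]
    rcases em (p.1 = s i) with h | h
    · simp only [if_pos h]
      have : ∀ x : ZMod 2, x + 1 + 1 = x := by decide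
      exact this p.2
    · simp [if_neg h]

include hra in
lemma sigma_liftable : M.IsLiftable (fun i => (sigmaFun_invol cs i).toPerm) := by
  intro i j
  rcases eq_or_ne i j with rfl | hij
  · rw [M.diagonal i, pow_one]
    ext p
    · exact congrArg Prod.fst ((sigmaFun_invol cs i) p)
    · exact congrArg Prod.snd ((sigmaFun_invol cs i) p)
  · rcases hra i j hij with h2 | h0
    · rw [h2, pow_two]
      have hcom : s i * s j = s j * s i := comm_of_two cs h2
      have hsqi : s i * s i = 1 := cs.simple_mul_simple_self i
      have hsqj : s j * s j = 1 := cs.simple_mul_simple_self j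
      have habab : s i * s j * (s i * s j) = 1 := by
        have := cs.simple_mul_simple_pow i j; rwa [h2, pow_two] at this
      have hbaba : s j * s i * (s j * s i) = 1 := by
        rw [← hcom]; exact habab
      have hbab : s j * s i * s j = s i := by
        rw [← hcom, mul_assoc, hsqj, mul_one]
      have haba : s i * s j * s i = s j := by
        rw [hcom, mul_assoc, hsqi, mul_one]
      have key : ∀ p : W × ZMod 2,
          sigmaFun cs i (sigmaFun cs j (sigmaFun cs i (sigmaFun cs j p))) = p := by
        intro ⟨t, ε⟩
        unfold sigmaFun
        simp only
        have e1 : (s j * t * s j = s i) ↔ (t = s i) := by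
          rw [sandwich_iff hsqj, hbab]
        have e2 : (s i * (s j * t * s j) * s i = s j) ↔ (t = s j) := by
          rw [sandwich_iff hsqi, haba, sandwich_iff hsqj,
            show s j * s j * s j = s j by rw [hsqj, one_mul]]
        have e3 : (s j * (s i * (s j * t * s j) * s i) * s j = s i) ↔ (t = s i) := by
          rw [sandwich_iff hsqj, hbab, sandwich_iff hsqi,
            show s i * s i * s i = s i by rw [hsqi, one_mul], sandwich_iff hsqj, hbab]
        refine Prod.ext ?_ ?_
        · show s i * (s j * (s i * (s j * t * s j) * s i) * s j) * s i = t
          rw [show s i * (s j * (s i * (s j * t * s j) * s i) * s j) * s i =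
            (s i * s j * (s i * s j)) * t * (s j * s i * (s j * s i)) by group]
          rw [habab, hbaba, one_mul, mul_one]
        · show ε + _ + _ + _ + _ = ε
          rw [if_congr e1 rfl rfl, if_congr e2 rfl rfl, if_congr e3 rfl rfl]
          exact zmod2_four ε _ _
      ext p
      · exact congrArg Prod.fst (key p)
      · exact congrArg Prod.snd (key p)
    · rw [h0, pow_zero]

/-- The counting homomorphism. -/
noncomputable def phi : W →* Equiv.Perm (W × ZMod 2) :=
  cs.lift ⟨_, sigma_liftable cs hra⟩

lemma phi_simple (i : B) (p : W × ZMod 2) :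
    phi cs hra (s i) p = sigmaFun cs i p := by
  unfold phi
  rw [cs.lift_apply_simple]
  rfl

lemma conj_eq_iff (y t z : W) : (y * t * y⁻¹ = z) ↔ (t = y⁻¹ * z * y) := by
  constructor
  · intro h
    have h2 := congrArg (fun g => y⁻¹ * g * y) h
    simpa [mul_assoc] using h2
  · intro h
    rw [h]
    simp [mul_assoc]

lemma phi_wordProd (ω : List B) (t : W) (ε : ZMod 2) :
    phi cs hra (π ω) (t, ε) =
      (π ω * t * (π ω)⁻¹, ε + ((ris ω).count t : ZMod 2)) := by
  induction ω with
  | nil => simp [CoxeterSystem.rightInvSeq]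
  | cons i ω ih =>
    rw [cs.wordProd_cons, map_mul]
    have hris : ris (i :: ω) = ((π ω)⁻¹ * s i * π ω) :: ris ω := rfl
    rw [Equiv.Perm.mul_apply, ih, phi_simple]
    unfold sigmaFun
    refine Prod.ext ?_ ?_
    · show s i * (π ω * t * (π ω)⁻¹) * s i = s i * π ω * t * (s i * π ω)⁻¹
      rw [mul_inv_rev, inv_simple]
      group
    · show ε + ((ris ω).count t : ZMod 2) + _ = ε + _
      rw [hris, List.count_cons]
      have hcond : (π ω * t * (π ω)⁻¹ = s i) ↔ ((π ω)⁻¹ * s i * π ω == t) = true := by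
        rw [beq_iff_eq, conj_eq_iff, eq_comm]
      push_cast
      rw [if_congr hcond rfl rfl]
      ring

/-- left-handed eta invariant : parity of the number of occurrences of `t` in the left
inversion sequence of any word for `x`. -/
noncomputable def eta (x t : W) : ZMod 2 := (phi cs hra x⁻¹ (t, 0)).2

lemma count_lis (ω : List B) (t : W) :
    ((lis ω).count t : ZMod 2) = eta cs hra (π ω) t := by
  have h1 : lis ω = (ris ω.reverse).reverse := by
    have h := cs.leftInvSeq_reverse ω.reverse
    rwa [List.reverse_reverse] at h
  rw [h1, List.count_reverse]
  have h2 := phi_wordProd cs hra ω.reverse t 0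
  rw [cs.wordProd_reverse] at h2
  unfold eta
  rw [h2]
  simp

lemma eta_descent {b : B} {x : W} (h : ℓ (s b * x) < ℓ x) : eta cs hra x (s b) = 1 := by
  obtain ⟨μ, hred, hμ⟩ := cs.exists_reduced_word' (s b * x)
  have hx : π (b :: μ) = x := by
    rw [cs.wordProd_cons, ← hμ, cs.simple_mul_simple_cancel_left]
  have hlis : lis (b :: μ) = (s b) :: (lis μ).map (MulAut.conj (s b)) := rfl
  have hnot : (s b) ∉ lis μ := by
    intro hmem
    have hinv := cs.isLeftInversion_of_mem_leftInvSeq hred hmem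
    rw [← hμ] at hinv
    have h2 := hinv.2
    rw [cs.simple_mul_simple_cancel_left] at h2
    omega
  rw [← hx, ← count_lis, hlis, List.count_cons]
  have h0 : (lis μ).count (s b) = 0 := List.count_eq_zero.mpr hnot
  have hmc : ((lis μ).map (MulAut.conj (s b))).count (s b) = 0 := by
    have h2 := List.count_map_of_injective (lis μ) (⇑(MulAut.conj (s b)))
      (MulAut.conj (s b)).injective (s b)
    rw [show (MulAut.conj (s b)) (s b) = s b from by simp] at h2
    exact h2.trans h0
  rw [hmc]
  simp

lemma eta_nondescent {b : B} {x : W} (h : ¬ ℓ (s b * x) < ℓ x) :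
    eta cs hra x (s b) = 0 := by
  obtain ⟨μ, hred, hμ⟩ := cs.exists_reduced_word' x
  have hnot : (s b) ∉ lis μ := by
    intro hmem
    have hinv := cs.isLeftInversion_of_mem_leftInvSeq hred hmem
    rw [← hμ] at hinv
    exact h hinv.2
  rw [hμ, ← count_lis, List.count_eq_zero.mpr hnot]
  simp

lemma mem_lis_of_eta_one {ω : List B} {t : W} (h : eta cs hra (π ω) t = 1) :
    t ∈ lis ω := by
  by_contra hmem
  have h0 : (lis ω).count t = 0 := List.count_eq_zero.mpr hmem
  rw [← count_lis, h0] at h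
  simp at h

lemma eta_conj_commute {b : B} {x : W} (hc : Commute (s b) x) (r : W) :
    eta cs hra x r = eta cs hra x (s b * r * s b) := by
  obtain ⟨μ, _, hμ⟩ := cs.exists_reduced_word' x
  have w1 : π (μ.concat b) = x * s b := by
    rw [cs.wordProd_concat, hμ]
  have w2 : π (b :: μ) = x * s b := by
    rw [cs.wordProd_cons, ← hμ]
    exact hc.eq
  have cend : π μ * s b * (π μ)⁻¹ = s b := by
    rw [← hμ]
    refine (conj_eq_iff x (s b) (s b)).mpr ?_
    rw [mul_assoc, hc.eq]
    simp
  have c1 : ((lis (μ.concat b)).count r : ZMod 2)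
      = ((lis μ).count r : ZMod 2) + (if r = s b then 1 else 0) := by
    rw [cs.leftInvSeq_concat, cend, List.concat_eq_append, List.count_append,
      List.count_singleton']
    push_cast
    rcases em (r = s b) with h | h
    · rw [if_pos h.symm, if_pos h]
    · rw [if_neg (fun h2 => h (Eq.symm h2)), if_neg h]
  have c2 : ((lis (b :: μ)).count r : ZMod 2)
      = (if r = s b then 1 else 0) + ((lis μ).count (s b * r * s b) : ZMod 2) := by
    have hlis : lis (b :: μ) = (s b) :: (lis μ).map (MulAut.conj (s b)) := rfl
    have h2 := List.count_map_of_injective (lis μ) (⇑(MulAut.conj (s b)))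
      (MulAut.conj (s b)).injective (s b * r * s b)
    have himg : (MulAut.conj (s b)) (s b * r * s b) = r := by
      rw [MulAut.conj_apply, inv_simple]
      exact sandwich (cs.simple_mul_simple_self b) r
    rw [himg] at h2
    rw [hlis, List.count_cons, h2]
    simp only [beq_iff_eq]
    push_cast
    rcases em (r = s b) with h | h
    · rw [if_pos h.symm, if_pos h]
      ring
    · rw [if_neg (fun h3 => h (Eq.symm h3)), if_neg h]
      ring
  have e1 : ((lis (μ.concat b)).count r : ZMod 2) = eta cs hra (x * s b) r := by
    rw [count_lis, w1]
  have e2 : ((lis (b :: μ)).count r : ZMod 2) = eta cs hra (x * s b) r := by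
    rw [count_lis, w2]
  have heq := e1.trans e2.symm
  rw [c1, c2] at heq
  rw [add_comm (if r = s b then (1:ZMod 2) else 0) _] at heq
  have hcnt := add_right_cancel heq
  rw [hμ, ← count_lis, ← count_lis]
  exact hcnt

lemma subLeft_sq (m : ℤ) : Equiv.subLeft m * Equiv.subLeft m = 1 := by
  ext x
  simp [Equiv.subLeft_apply]

lemma subLeft_conj (p q : ℤ) :
    Equiv.subLeft p * Equiv.subLeft q * Equiv.subLeft p = Equiv.subLeft (2*p - q) := by
  ext x
  simp only [Equiv.Perm.mul_apply, Equiv.subLeft_apply]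
  ring

include hra in
lemma psi_liftable {a b : B} (hM : M a b = 0) :
    M.IsLiftable (fun c => if c = a then Equiv.subLeft (0:ℤ)
      else if c = b then Equiv.subLeft (1:ℤ) else 1) := by
  set f : B → Equiv.Perm ℤ := fun c => if c = a then Equiv.subLeft (0:ℤ)
      else if c = b then Equiv.subLeft (1:ℤ) else 1 with hf
  have hsq : ∀ c, f c * f c = 1 := by
    intro c
    rw [hf]
    simp only
    split_ifs <;> simp [subLeft_sq]
  intro i j
  rcases eq_or_ne i j with rfl | hij
  · rw [M.diagonal i, pow_one]; exact hsq i
  · rcases hra i j hij with h2 | h0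
    · have hone : f i = 1 ∨ f j = 1 := by
        by_contra hcon
        push_neg at hcon
        obtain ⟨h1, h2'⟩ := hcon
        have hi : i = a ∨ i = b := by
          by_contra hic; push_neg at hic
          exact h1 (by rw [hf]; simp only; rw [if_neg hic.1, if_neg hic.2])
        have hj : j = a ∨ j = b := by
          by_contra hjc; push_neg at hjc
          exact h2' (by rw [hf]; simp only; rw [if_neg hjc.1, if_neg hjc.2])
        rcases hi with rfl | rfl <;> rcases hj with rfl | rfl
        · exact hij rfl
        · rw [hM] at h2; omega
        · rw [M.symmetric] at h2; rw [hM] at h2; omega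
        · exact hij rfl
      rw [h2, pow_two]
      rcases hone with h | h
      · rw [h, one_mul]; exact hsq j
      · rw [h, mul_one]; exact hsq i
    · rw [h0, pow_zero]

/-- the infinite dihedral representation detecting the pair `a b` with `M a b = 0` -/
noncomputable def psi {a b : B} (hM : M a b = 0) : W →* Equiv.Perm ℤ :=
  cs.lift ⟨_, psi_liftable hra hM⟩

lemma ne_of_M_zero {a b : B} (hM : M a b = 0) : a ≠ b := by
  intro h
  rw [h, M.diagonal] at hM
  omega

lemma psi_sa {a b : B} (hM : M a b = 0) : psi cs hra hM (s a) = Equiv.subLeft (0:ℤ) := by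
  unfold psi
  rw [cs.lift_apply_simple]
  simp

lemma psi_sb {a b : B} (hM : M a b = 0) : psi cs hra hM (s b) = Equiv.subLeft (1:ℤ) := by
  unfold psi
  rw [cs.lift_apply_simple]
  simp only
  rw [if_neg (Ne.symm (ne_of_M_zero hM))]
  simp

/-- alternating sequence of reflections in the (infinite) dihedral subgroup -/
noncomputable def rseq (a b : B) : ℕ → W
  | 0 => s a
  | (k+1) => (if Even k then s b else s a) * rseq a b k * (if Even k then s b else s a)

/-- its shadow sequence of integers -/
def cseq : ℕ → ℤ := fun k => if Even k then -(k:ℤ) else (k:ℤ)+1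

lemma psi_rseq {a b : B} (hM : M a b = 0) (k : ℕ) :
    psi cs hra hM (rseq cs a b k) = Equiv.subLeft (cseq k) := by
  induction k with
  | zero =>
    show psi cs hra hM (s a) = _
    rw [psi_sa]
    norm_num [cseq]
  | succ k ih =>
    show psi cs hra hM ((if Even k then s b else s a) * rseq cs a b k
      * (if Even k then s b else s a)) = _
    rw [map_mul, map_mul, ih]
    rcases Nat.even_or_odd k with hk | hk
    · rw [if_pos hk, psi_sb cs hra hM, subLeft_conj]
      congr 1
      unfold cseq
      rw [if_pos hk, if_neg (by simp [Nat.even_add_one, hk])]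
      push_cast
      ring
    · rw [if_neg (Nat.not_even_iff_odd.mpr hk), psi_sa cs hra hM, subLeft_conj]
      congr 1
      unfold cseq
      rw [if_neg (Nat.not_even_iff_odd.mpr hk), if_pos (by simp [Nat.even_add_one, Nat.not_even_iff_odd.mpr hk])]
      push_cast
      ring

lemma cseq_inj : Function.Injective cseq := by
  intro k l h
  unfold cseq at h
  rcases Nat.even_or_odd k with hk | hk <;> rcases Nat.even_or_odd l with hl | hl
  · rw [if_pos hk, if_pos hl] at h; omega
  · rw [if_pos hk, if_neg (Nat.not_even_iff_odd.mpr hl)] at h; omega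
  · rw [if_neg (Nat.not_even_iff_odd.mpr hk), if_pos hl] at h; omega
  · rw [if_neg (Nat.not_even_iff_odd.mpr hk), if_neg (Nat.not_even_iff_odd.mpr hl)] at h; omega

include hra in
lemma rseq_inj {a b : B} (hM : M a b = 0) : Function.Injective (rseq cs a b) := by
  intro k l h
  apply cseq_inj
  have h2 := congrArg (psi cs hra hM) h
  rw [psi_rseq cs hra hM, psi_rseq cs hra hM] at h2
  have h3 := congrArg (fun e : Equiv.Perm ℤ => e 0) h2
  simpa [Equiv.subLeft_apply] using h3

include hra in
/-- Exchange-type step: two distinct left descents give either commutation or a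
smaller element with the same two descents. -/
lemma exchange_aux {a b : B} {x : W} (hab : a ≠ b)
    (ha : ℓ (s a * x) < ℓ x) (hb : ℓ (s b * x) < ℓ x) :
    Commute (s b) x ∨ ∃ y : W, ℓ y < ℓ x ∧ ℓ (s a * y) < ℓ y ∧ ℓ (s b * y) < ℓ y := by
  obtain ⟨μ, hred, hμ⟩ := cs.exists_reduced_word' (s a * x)
  have hπ : π (a :: μ) = x := by
    rw [cs.wordProd_cons, ← hμ, cs.simple_mul_simple_cancel_left]
  set ω : List B := a :: μ with hω
  have hlx : ℓ x = ℓ (s a * x) + 1 := by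
    rcases cs.length_simple_mul x a with h | h <;> omega
  have hωred : cs.IsReduced ω := by
    unfold CoxeterSystem.IsReduced
    rw [hπ, hω, List.length_cons, ← hred, ← hμ, ← hlx]
  have hmem : s b ∈ lis ω := by
    apply mem_lis_of_eta_one cs hra
    rw [hπ]
    exact eta_descent cs hra hb
  obtain ⟨j, hj, hjel⟩ := List.getElem_of_mem hmem
  have hjlen : j < ω.length := by
    have := cs.length_leftInvSeq ω
    omega
  have hgd : (lis ω).getD j 1 = s b := by
    rw [List.getD_eq_getElem?_getD, List.getElem?_eq_getElem hj, Option.getD_some, hjel]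
  rw [cs.getD_leftInvSeq] at hgd
  rw [List.getElem?_eq_getElem hjlen] at hgd
  simp only [Option.map_some, Option.getD_some] at hgd
  -- hgd : π (ω.take j) * s (ω[j]) * (π (ω.take j))⁻¹ = s b
  have hletter : ω[j] = b := letter_eq_of_conj_eq cs hra hgd
  rw [hletter] at hgd
  set P := π (ω.take j) with hP
  have hcomm : s b * P = P * s b := by
    have h2 := congrArg (fun g => g * P) hgd
    simp only [mul_assoc] at h2
    rw [inv_mul_cancel, mul_one] at h2
    exact h2.symm
  have hj0 : j ≠ 0 := by
    intro h0
    subst h0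
    have ha0 : ω[0] = a := List.getElem_cons_zero a μ hjlen
    apply hab
    rw [← ha0]
    exact hletter
  have hytake : ω.take (j+1) = ω.take j ++ [b] := by
    rw [List.take_succ, List.getElem?_eq_getElem hjlen, hletter]
    rfl
  set y := π (ω.take (j+1)) with hy
  have hyP : y = P * s b := by
    rw [hy, hytake, cs.wordProd_append, cs.wordProd_singleton, hP]
  have hyred : cs.IsReduced (ω.take (j+1)) := hωred.take _
  have hylen : ℓ y = j + 1 := by
    rw [hy, hyred, List.length_take]
    omega
  have hPlen : ℓ P ≤ j := by
    calc ℓ P ≤ (ω.take j).length := cs.length_wordProd_le _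
    _ ≤ j := by rw [List.length_take]; omega
  have hyb : ℓ (s b * y) < ℓ y := by
    have : s b * y = P := by
      rw [hyP, ← mul_assoc, hcomm, mul_assoc, cs.simple_mul_simple_self, mul_one]
    rw [this]; omega
  have hya : ℓ (s a * y) < ℓ y := by
    have htake : ω.take (j+1) = a :: μ.take j := by
      rw [hω, List.take_succ_cons]
    have : s a * y = π (μ.take j) := by
      rw [hy, htake, cs.wordProd_cons, cs.simple_mul_simple_cancel_left]
    have h3 : ℓ (π (μ.take j)) ≤ j := by
      calc ℓ (π (μ.take j)) ≤ (μ.take j).length := cs.length_wordProd_le _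
      _ ≤ j := by rw [List.length_take]; omega
    rw [this]; omega
  rcases lt_or_ge (j+1) (ℓ x) with hlt | hge
  · right
    exact ⟨y, by omega, hya, hyb⟩
  · left
    have hωlen : ω.length = ℓ x := by
      have h4 := hωred
      unfold CoxeterSystem.IsReduced at h4
      rw [hπ] at h4
      omega
    have hjx : j + 1 = ω.length := by omega
    have htakeall : ω.take (j+1) = ω := by rw [hjx]; exact List.take_length (l := ω)
    have hxy : x = P * s b := by
      rw [← hyP, hy, htakeall, hπ]
    show s b * x = x * s b
    rw [hxy, ← mul_assoc, hcomm]


include hra in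
/-- Core lemma: in a right-angled system, no element has two non-commuting left descents. -/
lemma core : ∀ (n : ℕ) {a b : B} (x : W), ℓ x ≤ n → M a b = 0 →
    ℓ (s a * x) < ℓ x → ℓ (s b * x) < ℓ x → False := by
  intro n
  induction n with
  | zero => intro a b x hx _ ha _; omega
  | succ n ih =>
    intro a b x hx hM ha hb
    have hab : a ≠ b := ne_of_M_zero hM
    have hMba : M b a = 0 := by rw [M.symmetric]; exact hM
    rcases exchange_aux cs hra hab ha hb with hcb | ⟨y, hy1, hy2, hy3⟩
    swap
    · exact ih y (by omega) hM hy2 hy3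
    rcases exchange_aux cs hra hab.symm hb ha with hca | ⟨y, hy1, hy2, hy3⟩
    swap
    · exact ih y (by omega) hM hy3 hy2
    obtain ⟨μ, hred, hμ⟩ := cs.exists_reduced_word' x
    have hchain : ∀ k, eta cs hra x (rseq cs a b k) = 1 := by
      intro k
      induction k with
      | zero => exact eta_descent cs hra ha
      | succ k ihk =>
        show eta cs hra x ((if Even k then s b else s a) * rseq cs a b k
          * (if Even k then s b else s a)) = 1
        rcases Nat.even_or_odd k with hk | hk
        · rw [if_pos hk, ← eta_conj_commute cs hra hcb]; exact ihk
        · rw [if_neg (Nat.not_even_iff_odd.mpr hk), ← eta_conj_commute cs hra hca]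
          exact ihk
    have hmem : ∀ k, rseq cs a b k ∈ lis μ := by
      intro k
      have h5 := hchain k
      rw [hμ] at h5
      exact mem_lis_of_eta_one cs hra h5
    have hμlen : μ.length = ℓ x := by
      have h6 := hred
      unfold CoxeterSystem.IsReduced at h6
      rw [← hμ] at h6
      omega
    have h1 : ∀ k : Fin (ℓ x + 1), rseq cs a b (k : ℕ) ∈ (lis μ).toFinset :=
      fun k => List.mem_toFinset.mpr (hmem k)
    have hinj : Function.Injective
        (fun k : Fin (ℓ x + 1) => (⟨rseq cs a b (k : ℕ), h1 k⟩ :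
          {w // w ∈ (lis μ).toFinset})) := by
      intro k l hkl
      have := congrArg Subtype.val hkl
      simp only at this
      exact Fin.ext (rseq_inj cs hra hM this)
    have hle := Fintype.card_le_of_injective _ hinj
    rw [Fintype.card_fin, Fintype.card_coe] at hle
    have hfle : (lis μ).toFinset.card ≤ (lis μ).length := List.toFinset_card_le _
    have hlislen : (lis μ).length = μ.length := cs.length_leftInvSeq μ
    omega

include hra in
/-- If `x` commutes with `s b` then every left descent of `x` commutes with `s b`. -/
lemma knot {a b : B} {x : W} (hc : Commute (s b) x) (ha : ℓ (s a * x) < ℓ x) :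
    Commute (s b) (s a) := by
  rcases eq_or_ne a b with rfl | hab
  · exact Commute.refl _
  rcases hra a b hab with h2 | h0
  · exact (comm_of_two cs h2).symm
  exfalso
  rcases lt_or_ge (ℓ (s b * x)) (ℓ x) with hbx | hbx
  · exact core cs hra (ℓ x) x le_rfl h0 ha hbx
  · -- b is not a descent of x; pass to x' = s b * x = x * s b
    have hxb : ℓ (s b * x) = ℓ x + 1 := by
      rcases cs.length_simple_mul x b with h | h <;> omega
    have hb' : ℓ (s b * (s b * x)) < ℓ (s b * x) := by
      rw [cs.simple_mul_simple_cancel_left]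
      omega
    have ha' : ℓ (s a * (s b * x)) < ℓ (s b * x) := by
      have h1 : s a * (s b * x) = s a * x * s b := by
        rw [hc.eq, ← mul_assoc]
      rw [h1, hxb]
      calc ℓ (s a * x * s b) ≤ ℓ (s a * x) + ℓ (s b) := cs.length_mul_le _ _
        _ = ℓ (s a * x) + 1 := by rw [cs.length_simple]
        _ < ℓ x + 1 := by omega
    exact core cs hra (ℓ (s b * x)) (s b * x) le_rfl h0 ha' hb'


include hra in
/-- Convexity: if `p` commutes with `s b`, so does every `u` with `u ≤ p` in weak order. -/
lemma commute_of_startsWith {b : B} : ∀ (n : ℕ) (u p : W), ℓ u ≤ n →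
    Commute (s b) p → cs.startsWith u p → Commute (s b) u := by
  intro n
  induction n with
  | zero =>
    intro u p hu _ _
    have h1 : u = 1 := cs.length_eq_zero_iff.mp (by omega)
    rw [h1]
    exact Commute.one_right _
  | succ n ih =>
    intro u p hu hc hsw
    rcases Nat.eq_zero_or_pos (ℓ u) with hu0 | hupos
    · have h1 : u = 1 := cs.length_eq_zero_iff.mp hu0
      rw [h1]
      exact Commute.one_right _
    have hune : u ≠ 1 := by
      intro h; rw [h] at hupos; simp at hupos
    obtain ⟨a, hadesc⟩ := cs.exists_leftDescent_of_ne_one hune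
    have hau : ℓ (s a * u) < ℓ u := hadesc
    have hsw' := hsw
    unfold CoxeterSystem.startsWith at hsw'
    have hap : ℓ (s a * p) < ℓ p := by
      have hdecomp : s a * p = (s a * u) * (u⁻¹ * p) := by group
      calc ℓ (s a * p) ≤ ℓ (s a * u) + ℓ (u⁻¹ * p) := by
            rw [hdecomp]; exact cs.length_mul_le _ _
        _ < ℓ u + ℓ (u⁻¹ * p) := by omega
        _ = ℓ p := hsw'
    have hcab : Commute (s b) (s a) := knot cs hra hc hap
    have hlu : ℓ (s a * u) + 1 = ℓ u := by
      rcases cs.length_simple_mul u a with h | h <;> omega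
    have hlp : ℓ (s a * p) + 1 = ℓ p := by
      rcases cs.length_simple_mul p a with h | h <;> omega
    have hsw2 : cs.startsWith (s a * u) (s a * p) := by
      unfold CoxeterSystem.startsWith
      have h2 : (s a * u)⁻¹ * (s a * p) = u⁻¹ * p := by
        rw [mul_inv_rev, inv_simple, mul_assoc, ← mul_assoc (s a),
          cs.simple_mul_simple_self, one_mul]
      rw [h2]
      omega
    have hcrec := ih (s a * u) (s a * p) (by omega) (hcab.mul_right hc) hsw2
    have h3 : u = s a * (s a * u) := by rw [cs.simple_mul_simple_cancel_left]
    rw [h3]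
    exact hcab.mul_right hcrec

include hra in
/-- Main lemma: if `u ≤ v` in weak order, `b` is a left descent of `v` but not of `u`,
then `u` commutes with `s b`. -/
lemma main_lemma {b : B} {u v : W} (hu : ℓ (s b * u) = ℓ u + 1)
    (huv : cs.startsWith u v) (hbv : ℓ (s b * v) < ℓ v) : Commute (s b) u := by
  obtain ⟨β, hβred, hβ⟩ := cs.exists_reduced_word' u
  obtain ⟨γ, hγred, hγ⟩ := cs.exists_reduced_word' (u⁻¹ * v)
  have hsw := huv
  unfold CoxeterSystem.startsWith at hsw
  set ω : List B := β ++ γ with hω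
  have hπ : π ω = v := by
    rw [hω, cs.wordProd_append, ← hβ, ← hγ]
    group
  have hβlen : β.length = ℓ u := by
    have h0 := hβred; unfold CoxeterSystem.IsReduced at h0; rw [← hβ] at h0; omega
  have hγlen : γ.length = ℓ (u⁻¹ * v) := by
    have h0 := hγred; unfold CoxeterSystem.IsReduced at h0; rw [← hγ] at h0; omega
  have hωred : cs.IsReduced ω := by
    unfold CoxeterSystem.IsReduced
    rw [hπ, hω, List.length_append]
    omega
  have hmem : s b ∈ lis ω := by
    apply mem_lis_of_eta_one cs hra
    rw [hπ]
    exact eta_descent cs hra hbv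
  obtain ⟨j, hj, hjel⟩ := List.getElem_of_mem hmem
  have hjlen : j < ω.length := by
    have := cs.length_leftInvSeq ω
    omega
  have hgd : (lis ω).getD j 1 = s b := by
    rw [List.getD_eq_getElem?_getD, List.getElem?_eq_getElem hj, Option.getD_some, hjel]
  rw [cs.getD_leftInvSeq] at hgd
  rw [List.getElem?_eq_getElem hjlen] at hgd
  simp only [Option.map_some, Option.getD_some] at hgd
  set P := π (ω.take j) with hP
  have hcomm : Commute (s b) P := by
    have hletter : ω[j] = b := letter_eq_of_conj_eq cs hra hgd
    rw [hletter] at hgd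
    have h2 := congrArg (fun g => g * P) hgd
    simp only [mul_assoc] at h2
    rw [inv_mul_cancel, mul_one] at h2
    exact h2.symm
  have hjβ : β.length ≤ j := by
    by_contra hjb
    push_neg at hjb
    have htakeβ : ω.take β.length = β := by
      rw [hω]
      exact List.take_left (l₁ := β) (l₂ := γ)
    have hlisβ : (lis ω).take β.length = lis β := by
      rw [← cs.leftInvSeq_take, htakeβ]
    have hmemβ : s b ∈ lis β := by
      rw [← hlisβ]
      refine List.mem_iff_getElem.mpr ⟨j, ?_, ?_⟩
      · rw [List.length_take, cs.length_leftInvSeq]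
        rw [hω, List.length_append]
        omega
      · rw [List.getElem_take]
        exact hjel
    have hinv := cs.isLeftInversion_of_mem_leftInvSeq hβred hmemβ
    rw [← hβ] at hinv
    have := hinv.2
    omega
  have htakej : ω.take j = β ++ γ.take (j - β.length) := by
    rw [hω, List.take_append,
      List.take_of_length_le (by omega : β.length ≤ j)]
  have hPu : P = u * π (γ.take (j - β.length)) := by
    rw [hP, htakej, cs.wordProd_append, ← hβ]
  have hPlen : ℓ P = j := by
    have h5 := hωred.take j
    unfold CoxeterSystem.IsReduced at h5
    rw [← hP] at h5
    rw [h5, List.length_take]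
    omega
  have hswP : cs.startsWith u P := by
    unfold CoxeterSystem.startsWith
    have h6 : u⁻¹ * P = π (γ.take (j - β.length)) := by
      rw [hPu, ← mul_assoc, inv_mul_cancel, one_mul]
    have h7 : ℓ (u⁻¹ * P) ≤ j - β.length := by
      rw [h6]
      calc ℓ (π (γ.take (j - β.length))) ≤ (γ.take (j - β.length)).length :=
            cs.length_wordProd_le _
        _ ≤ j - β.length := by rw [List.length_take]; omega
    have h8 : ℓ P ≤ ℓ u + ℓ (u⁻¹ * P) := by
      have h9 := cs.length_mul_le u (u⁻¹ * P)
      rwa [← mul_assoc, mul_inv_cancel, one_mul] at h9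
    omega
  exact commute_of_startsWith cs hra (ℓ u) u P le_rfl hcomm hswP
end SWAux


/-- In a right-angled Coxeter system, if `w` does not centralize `s` and both `v` and `w`
start with `s`, then `w ≰ s·v` and `s·w ≰ v`. -/
theorem stmt2 {B W : Type*} [Group W] {M : CoxeterMatrix B} (cs : CoxeterSystem M W)
    (hra : ∀ i j : B, i ≠ j → M i j = 2 ∨ M i j = 0)
    (b : B) (w v : W)
    (hcen : ¬ Commute (cs.simple b) w)
    (hw : cs.startsWith (cs.simple b) w) (hv : cs.startsWith (cs.simple b) v) :
    ¬ cs.startsWith w (cs.simple b * v) ∧ ¬ cs.startsWith (cs.simple b * w) v := by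
  have hw' : 1 + cs.length (cs.simple b * w) = cs.length w := by
    have h := hw
    unfold CoxeterSystem.startsWith at h
    rwa [cs.length_simple, cs.inv_simple] at h
  have hv' : 1 + cs.length (cs.simple b * v) = cs.length v := by
    have h := hv
    unfold CoxeterSystem.startsWith at h
    rwa [cs.length_simple, cs.inv_simple] at h
  constructor
  · intro h
    have htrans := SWAux.startsWith_trans cs hw h
    unfold CoxeterSystem.startsWith at htrans
    rw [cs.length_simple, cs.inv_simple, ← mul_assoc, cs.simple_mul_simple_self,
      one_mul] at htrans
    omega
  · intro h
    apply hcen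
    have hu : cs.length (cs.simple b * (cs.simple b * w))
        = cs.length (cs.simple b * w) + 1 := by
      rw [cs.simple_mul_simple_cancel_left]
      omega
    have hbv : cs.length (cs.simple b * v) < cs.length v := by omega
    have hcom := SWAux.main_lemma cs hra hu h hbv
    have h2 : w = cs.simple b * (cs.simple b * w) := by
      rw [cs.simple_mul_simple_cancel_left]
    rw [h2]
    exact (Commute.refl (cs.simple b)).mul_right hcom
end

section
/- Let (W,S) be a right-angled Coxeter system, s ∈ S, and w ∈ C_W(s) with s ≰ w (w does not start with s). Then for all v ∈ W with s ≰ v: w ≤ v if and only if w ≤ s·v. -/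
namespace RAaux

open CoxeterSystem List
open scoped Classical

variable {B W : Type*} [Group W] {M : CoxeterMatrix B} (cs : CoxeterSystem M W)

lemma sand {x u : W} (hx : x * x = 1) : x * (x * u * x) * x = u := by
  rw [show x * (x * u * x) * x = (x * x) * u * (x * x) from by simp only [mul_assoc], hx,
    one_mul, mul_one]

lemma conj_eq_iff {x y u : W} (hx : x * x = 1) : x * u * x = y ↔ u = x * y * x := by
  constructor
  · rintro rfl; exact (sand hx).symm
  · rintro rfl; exact sand hx

/-- The function underlying the reflection-sign permutation. -/
noncomputable def sigmaFun (i : B) : W × ZMod 2 → W × ZMod 2 :=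
  fun p => (cs.simple i * p.1 * cs.simple i, p.2 + if p.1 = cs.simple i then 1 else 0)

lemma sigmaFun_invol (i : B) : Function.Involutive (sigmaFun cs i) := by
  intro ⟨t, ε⟩
  have hss := cs.simple_mul_simple_self i
  have h2 : (cs.simple i * t * cs.simple i = cs.simple i) ↔ t = cs.simple i := by
    rw [conj_eq_iff hss, show cs.simple i * cs.simple i * cs.simple i = cs.simple i from by
      rw [hss, one_mul]]
  simp only [sigmaFun]
  refine Prod.ext (sand hss) ?_
  simp only [h2]
  by_cases ht : t = cs.simple i
  · simp only [ht, if_true]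
    rw [add_assoc, show ((1 : ZMod 2) + 1) = 0 from rfl, add_zero]
  · simp [ht]

/-- The permutation of `W × ZMod 2` associated to a simple reflection. -/
noncomputable def sigma (i : B) : Equiv.Perm (W × ZMod 2) := (sigmaFun_invol cs i).toPerm

lemma sigma_apply (i : B) (t : W) (ε : ZMod 2) :
    sigma cs i (t, ε) = (cs.simple i * t * cs.simple i,
      ε + if t = cs.simple i then 1 else 0) := rfl

lemma sigma_mul_self (i : B) : sigma cs i * sigma cs i = 1 := by
  ext p
  · exact congrArg Prod.fst (sigmaFun_invol cs i p)
  · exact congrArg Prod.snd (sigmaFun_invol cs i p)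

lemma sigma_liftable (hra : ∀ i j : B, i ≠ j → M i j = 2 ∨ M i j = 0) :
    M.IsLiftable (sigma cs) := by
  intro i j
  rcases eq_or_ne i j with rfl | hij
  · rw [M.diagonal i, pow_one, sigma_mul_self]
  · rcases hra i j hij with h2 | h0
    · -- commuting case
      have hrel := cs.simple_mul_simple_pow i j
      rw [h2] at hrel
      set a := cs.simple i with ha
      set b := cs.simple j with hb
      have haa : a * a = 1 := cs.simple_mul_simple_self i
      have hbb : b * b = 1 := cs.simple_mul_simple_self j
      have hcomm : a * b = b * a := by
        have h1 : (a * b) * (a * b) = 1 := by rw [← sq]; exact hrel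
        have h2' : (a * b)⁻¹ = b * a := by
          rw [mul_inv_rev, inv_eq_of_mul_eq_one_right haa, inv_eq_of_mul_eq_one_right hbb]
        rw [← h2']
        exact (inv_eq_of_mul_eq_one_right h1).symm
      have hbab : b * a * b = a := by rw [← hcomm, mul_assoc, hbb, mul_one]
      have haba : a * b * a = b := by rw [hcomm, mul_assoc, haa, mul_one]
      have hscomm : sigma cs i * sigma cs j = sigma cs j * sigma cs i := by
        ext ⟨t, ε⟩
        · show (sigma cs i ((sigma cs j) (t, ε))).1 = (sigma cs j ((sigma cs i) (t, ε))).1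
          simp only [sigma_apply]
          calc a * (b * t * b) * a = (a * b) * t * (b * a) := by simp only [mul_assoc]
            _ = (b * a) * t * (a * b) := by rw [hcomm]
            _ = b * (a * t * a) * b := by simp only [mul_assoc]
        · show (sigma cs i ((sigma cs j) (t, ε))).2 = (sigma cs j ((sigma cs i) (t, ε))).2
          simp only [sigma_apply]
          have c1 : (b * t * b = a) ↔ (t = a) := by rw [conj_eq_iff hbb, hbab]
          have c2 : (a * t * a = b) ↔ (t = b) := by rw [conj_eq_iff haa, haba]
          rw [c1, c2]
          ring
      rw [h2, sq, show sigma cs i * sigma cs j * (sigma cs i * sigma cs j)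
          = sigma cs i * (sigma cs j * sigma cs i) * sigma cs j from by simp only [mul_assoc],
        ← hscomm, show sigma cs i * (sigma cs i * sigma cs j) * sigma cs j
          = (sigma cs i * sigma cs i) * (sigma cs j * sigma cs j) from by simp only [mul_assoc],
        sigma_mul_self, sigma_mul_self, one_mul]
    · rw [h0, pow_zero]

variable (hra : ∀ i j : B, i ≠ j → M i j = 2 ∨ M i j = 0)

/-- The sign homomorphism `W →* Perm (W × ZMod 2)`. -/
noncomputable def phi : W →* Equiv.Perm (W × ZMod 2) :=
  cs.lift ⟨sigma cs, sigma_liftable cs hra⟩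

lemma phi_simple (i : B) : phi cs hra (cs.simple i) = sigma cs i :=
  cs.lift_apply_simple (sigma_liftable cs hra) i

lemma phi_not_mem (ω : List B) (t : W) (ε : ZMod 2) (h : t ∉ cs.leftInvSeq ω) :
    (phi cs hra (cs.wordProd ω)⁻¹ (t, ε)).2 = ε := by
  induction ω generalizing t ε with
  | nil => simp
  | cons i ω ih =>
    rw [cs.wordProd_cons, mul_inv_rev, cs.inv_simple, map_mul, Equiv.Perm.mul_apply,
      phi_simple, sigma_apply]
    rw [CoxeterSystem.leftInvSeq] at h
    rw [List.mem_cons] at h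
    push_neg at h
    obtain ⟨hne, hnmem⟩ := h
    rw [if_neg hne, add_zero]
    apply ih
    intro hmem
    apply hnmem
    refine List.mem_map.mpr ⟨cs.simple i * t * cs.simple i, hmem, ?_⟩
    simp only [MulAut.conj_apply, cs.inv_simple]
    exact sand (cs.simple_mul_simple_self i)

lemma phi_mem (ω : List B) (t : W) (ε : ZMod 2) (hnd : (cs.leftInvSeq ω).Nodup)
    (h : t ∈ cs.leftInvSeq ω) :
    (phi cs hra (cs.wordProd ω)⁻¹ (t, ε)).2 = ε + 1 := by
  induction ω generalizing t ε with
  | nil => simp at h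
  | cons i ω ih =>
    have hss := cs.simple_mul_simple_self i
    rw [cs.wordProd_cons, mul_inv_rev, cs.inv_simple, map_mul, Equiv.Perm.mul_apply,
      phi_simple, sigma_apply]
    rw [CoxeterSystem.leftInvSeq] at h hnd
    rw [List.nodup_cons] at hnd
    obtain ⟨hhead, hnd'⟩ := hnd
    rcases List.mem_cons.mp h with rfl | hmem
    · rw [if_pos rfl]
      have hfix : cs.simple i * cs.simple i * cs.simple i = cs.simple i := by
        rw [hss, one_mul]
      rw [hfix]
      apply phi_not_mem
      intro hmem'
      apply hhead
      refine List.mem_map.mpr ⟨cs.simple i, hmem', ?_⟩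
      simp only [MulAut.conj_apply, cs.inv_simple]
      rw [hss, one_mul]
    · obtain ⟨u, hu, rfl⟩ := List.mem_map.mp hmem
      simp only [MulAut.conj_apply, cs.inv_simple]
      have hne : cs.simple i * u * cs.simple i ≠ cs.simple i := by
        intro hcontra
        have : u = cs.simple i := by
          rw [conj_eq_iff hss] at hcontra
          rw [hcontra, hss, one_mul]
        apply hhead
        refine List.mem_map.mpr ⟨u, hu, ?_⟩
        simp only [MulAut.conj_apply, cs.inv_simple]
        rw [this, hss, one_mul]
      rw [if_neg hne, add_zero, sand hss]
      exact ih u ε (List.Nodup.of_map _ hnd') hu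

/-- Strong exchange for simple reflections. -/
lemma simple_mem_leftInvSeq (hra : ∀ i j : B, i ≠ j → M i j = 2 ∨ M i j = 0)
    {ω : List B} (hω : cs.IsReduced ω) (b : B)
    (hlt : cs.length (cs.simple b * cs.wordProd ω) < cs.length (cs.wordProd ω)) :
    cs.simple b ∈ cs.leftInvSeq ω := by
  by_contra hnm
  have h0 : (phi cs hra (cs.wordProd ω)⁻¹ (cs.simple b, 0)).2 = 0 :=
    phi_not_mem cs hra ω _ 0 hnm
  obtain ⟨τ, hτlen, hτ⟩ := cs.exists_reduced_word (cs.simple b * cs.wordProd ω)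
  have hlen : cs.length (cs.simple b * cs.wordProd ω) + 1 = cs.length (cs.wordProd ω) :=
    (cs.length_simple_mul (cs.wordProd ω) b).resolve_left (by omega)
  have hπ : cs.wordProd (b :: τ) = cs.wordProd ω := by
    rw [cs.wordProd_cons, ← hτ, ← mul_assoc, cs.simple_mul_simple_self, one_mul]
  have hred : cs.IsReduced (b :: τ) := by
    unfold CoxeterSystem.IsReduced
    rw [hπ, List.length_cons, ← (hτlen : cs.length (cs.wordProd τ) = τ.length), ← hτ]
    omega
  have hmem : cs.simple b ∈ cs.leftInvSeq (b :: τ) := by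
    rw [CoxeterSystem.leftInvSeq]; exact List.mem_cons_self
  have h1 : (phi cs hra (cs.wordProd (b :: τ))⁻¹ (cs.simple b, 0)).2 = 0 + 1 :=
    phi_mem cs hra _ _ 0 (hred.nodup_leftInvSeq) hmem
  rw [hπ, h0] at h1
  exact absurd h1.symm (by rw [zero_add]; exact one_ne_zero)

lemma leftInvSeq_append (ω₁ ω₂ : List B) :
    cs.leftInvSeq (ω₁ ++ ω₂) = cs.leftInvSeq ω₁ ++
      (cs.leftInvSeq ω₂).map (fun t => cs.wordProd ω₁ * t * (cs.wordProd ω₁)⁻¹) := by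
  induction ω₁ with
  | nil => simp
  | cons i ω₁ ih =>
    rw [List.cons_append, CoxeterSystem.leftInvSeq, CoxeterSystem.leftInvSeq, ih,
      List.map_append, List.map_map, cs.wordProd_cons]
    have hm : List.map (⇑(MulAut.conj (cs.simple i)) ∘
          fun t => cs.wordProd ω₁ * t * (cs.wordProd ω₁)⁻¹) (cs.leftInvSeq ω₂)
        = List.map (fun t => cs.simple i * cs.wordProd ω₁ * t *
            (cs.simple i * cs.wordProd ω₁)⁻¹) (cs.leftInvSeq ω₂) :=
      List.map_congr_left fun t _ => by
        simp only [Function.comp_apply, MulAut.conj_apply, mul_inv_rev, cs.inv_simple, mul_assoc]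
    rw [hm, List.cons_append]

/-- The key lemma. -/
lemma key (hra : ∀ i j : B, i ≠ j → M i j = 2 ∨ M i j = 0)
    (b : B) (w x : W) (hcomm : cs.simple b * w = w * cs.simple b)
    (hw : cs.length w < cs.length (cs.simple b * w))
    (hadd : cs.length (w * x) = cs.length w + cs.length x)
    (hlt : cs.length (cs.simple b * (w * x)) < cs.length (w * x)) :
    cs.length (cs.simple b * x) < cs.length x := by
  obtain ⟨ωw, hωwlen, hωw⟩ := cs.exists_reduced_word w
  obtain ⟨ωx, hωxlen, hωx⟩ := cs.exists_reduced_word x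
  have hπ : cs.wordProd (ωw ++ ωx) = w * x := by rw [cs.wordProd_append, ← hωw, ← hωx]
  have hred : cs.IsReduced (ωw ++ ωx) := by
    unfold CoxeterSystem.IsReduced
    rw [hπ, List.length_append, ← (hωwlen : cs.length (cs.wordProd ωw) = ωw.length),
      ← (hωxlen : cs.length (cs.wordProd ωx) = ωx.length), ← hωw, ← hωx, hadd]
  have hmem : cs.simple b ∈ cs.leftInvSeq (ωw ++ ωx) := by
    apply simple_mem_leftInvSeq cs hra hred
    rw [hπ]; exact hlt
  rw [leftInvSeq_append] at hmem
  rcases List.mem_append.mp hmem with hmem1 | hmem2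
  · exfalso
    have hredw : cs.IsReduced ωw := by
      unfold CoxeterSystem.IsReduced; exact hωwlen
    have := cs.isLeftInversion_of_mem_leftInvSeq hredw hmem1
    rw [← hωw] at this
    exact absurd this.2 (by omega)
  · obtain ⟨u, hu, hequ⟩ := List.mem_map.mp hmem2
    rw [← hωw] at hequ
    have hueq : u = cs.simple b := by
      have h1 : w * u = cs.simple b * w := by
        rw [← hequ]; group
      rw [hcomm] at h1
      exact mul_left_cancel h1
    have hredx : cs.IsReduced ωx := by
      unfold CoxeterSystem.IsReduced; exact hωxlen
    have := cs.isLeftInversion_of_mem_leftInvSeq hredx (hueq ▸ hu)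
    rw [← hωx] at this
    exact this.2

end RAaux

/-- In a right-angled Coxeter system, if `w` centralizes `s` and `w` does not start with `s`,
then for every `v` not starting with `s`: `w ≤ v ↔ w ≤ s·v`. -/
theorem stmt3 {B W : Type*} [Group W] {M : CoxeterMatrix B} (cs : CoxeterSystem M W)
    (hra : ∀ i j : B, i ≠ j → M i j = 2 ∨ M i j = 0)
    (b : B) (w : W)
    (hcen : Commute (cs.simple b) w)
    (hw : ¬ cs.startsWith (cs.simple b) w) :
    ∀ v : W, ¬ cs.startsWith (cs.simple b) v →
      (cs.startsWith w v ↔ cs.startsWith w (cs.simple b * v)) := by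
  intro v hv
  have hss := cs.simple_mul_simple_self b
  have hcomm : cs.simple b * w = w * cs.simple b := hcen
  have hnostart : ∀ z : W, ¬ cs.startsWith (cs.simple b) z →
      cs.length (cs.simple b * z) = cs.length z + 1 := by
    intro z hz
    rcases cs.length_simple_mul z b with h | h
    · exact h
    · exfalso
      apply hz
      unfold CoxeterSystem.startsWith
      rw [cs.inv_simple, cs.length_simple]
      omega
  have hlw : cs.length (cs.simple b * w) = cs.length w + 1 := hnostart w hw
  have hlv : cs.length (cs.simple b * v) = cs.length v + 1 := hnostart v hv
  have hwinv : w⁻¹ * (cs.simple b * v) = cs.simple b * (w⁻¹ * v) := by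
    have h3 : w⁻¹ * cs.simple b = cs.simple b * w⁻¹ := (hcen.inv_right).eq.symm
    rw [← mul_assoc, h3, mul_assoc]
  set u := w⁻¹ * v with hu
  have hvwu : w * u = v := by rw [hu, ← mul_assoc, mul_inv_cancel, one_mul]
  unfold CoxeterSystem.startsWith
  rw [hwinv, ← hu, hlv]
  constructor
  · intro h1
    -- claim ℓ(s u) = ℓ u + 1
    rcases cs.length_simple_mul u b with hsu | hsu
    · omega
    · exfalso
      have : cs.length (cs.simple b * v) ≤ cs.length w + cs.length (cs.simple b * u) := by
        have heq : cs.simple b * v = w * (cs.simple b * u) := by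
          rw [← hvwu, ← mul_assoc, hcomm, mul_assoc]
        rw [heq]
        exact cs.length_mul_le w (cs.simple b * u)
      omega
  · intro h2
    rcases cs.length_simple_mul u b with hsu | hsu
    · omega
    · -- contradiction via the key lemma
      exfalso
      have hadd : cs.length (w * (cs.simple b * u)) = cs.length w + cs.length (cs.simple b * u) := by
        have heq : w * (cs.simple b * u) = cs.simple b * v := by
          rw [← mul_assoc, ← hcomm, mul_assoc, hvwu]
        rw [heq, hlv]
        omega
      have hlt : cs.length (cs.simple b * (w * (cs.simple b * u)))
          < cs.length (w * (cs.simple b * u)) := by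
        have heq : w * (cs.simple b * u) = cs.simple b * v := by
          rw [← mul_assoc, ← hcomm, mul_assoc, hvwu]
        rw [heq, ← mul_assoc, hss, one_mul, hlv]
        omega
      have := RAaux.key cs hra b w (cs.simple b * u) hcomm (by omega) hadd hlt
      rw [← mul_assoc, hss, one_mul] at this
      omega
end

section
/- Let (W,S) be a right-angled, finite rank Coxeter system and g = s₁...sₙ a closed path in the Coxeter diagram covering the whole graph. Then |s·g| > |g| for every s ∈ S with s ≠ s₁. -/
open List

namespace Stmt7Aux

variable {B W : Type*} [Group W] {M : CoxeterMatrix B} (cs : CoxeterSystem M W)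

/-! ### Sign homomorphisms -/

lemma sgn_liftable [DecidableEq B] (hra : ∀ i j : B, i ≠ j → M i j = 2 ∨ M i j = 0) (x : B) :
    M.IsLiftable (fun i => if i = x then (-1 : ℤˣ) else 1) := by
  intro i j
  dsimp only
  rcases eq_or_ne i j with rfl | hij
  · rw [M.diagonal, pow_one]
    split_ifs <;> decide
  · rcases hra i j hij with h | h <;> rw [h]
    · split_ifs <;> decide
    · exact pow_zero _

noncomputable def sgn [DecidableEq B] (hra : ∀ i j : B, i ≠ j → M i j = 2 ∨ M i j = 0)
    (x : B) : W →* ℤˣ :=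
  cs.lift ⟨fun i => if i = x then (-1 : ℤˣ) else 1, sgn_liftable hra x⟩

lemma sgn_simple [DecidableEq B] (hra : ∀ i j : B, i ≠ j → M i j = 2 ∨ M i j = 0) (x i : B) :
    sgn cs hra x (cs.simple i) = if i = x then (-1 : ℤˣ) else 1 :=
  cs.lift_apply_simple _ i

/-- Two simple reflections that are conjugate have (in the right-angled case)
the same index. -/
lemma eq_of_simple_eq_conj (hra : ∀ i j : B, i ≠ j → M i j = 2 ∨ M i j = 0) {x y : B} {w : W}
    (h : cs.simple x = w * cs.simple y * w⁻¹) : y = x := by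
  classical
  by_contra hyx
  have h1 := congrArg (sgn cs hra x) h
  rw [map_mul, map_mul, map_inv, sgn_simple, sgn_simple, if_pos rfl, if_neg hyx,
    mul_one, mul_inv_cancel] at h1
  exact absurd h1 (by decide)

/-! ### The infinite dihedral representation -/

/-- `n ↦ -n` -/
def permC : Equiv.Perm ℤ := Equiv.neg ℤ

/-- `n ↦ 1 - n` -/
def permS : Equiv.Perm ℤ := (Equiv.neg ℤ).trans (Equiv.addLeft 1)

@[simp] lemma permC_apply (n : ℤ) : permC n = -n := rfl
@[simp] lemma permS_apply (n : ℤ) : permS n = 1 + -n := rfl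

lemma permC_mul_self : permC * permC = 1 := by
  ext n; simp [Equiv.Perm.mul_apply]

lemma permS_mul_self : permS * permS = 1 := by
  ext n; simp [Equiv.Perm.mul_apply]

lemma psi_liftable [DecidableEq B] (hra : ∀ i j : B, i ≠ j → M i j = 2 ∨ M i j = 0)
    {x y : B} (hxy : M x y = 0) :
    M.IsLiftable (fun i => if i = x then permC else if i = y then permS else 1) := by
  have hxyne : x ≠ y := fun h => by simp [h, M.diagonal] at hxy
  intro i j
  dsimp only
  have hsq : ∀ u : Equiv.Perm ℤ, (u = permC ∨ u = permS ∨ u = 1) → u * u = 1 := by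
    rintro u (rfl | rfl | rfl)
    · exact permC_mul_self
    · exact permS_mul_self
    · exact one_mul 1
  have hmem : ∀ i : B, (if i = x then permC else if i = y then permS else 1) = permC ∨
      (if i = x then permC else if i = y then permS else 1) = permS ∨
      (if i = x then permC else if i = y then permS else 1) = 1 := by
    intro i; split_ifs <;> simp
  rcases eq_or_ne i j with rfl | hij
  · rw [M.diagonal, pow_one]
    exact hsq _ (hmem i)
  · rcases eq_or_ne i x with rfl | hix
    · rcases eq_or_ne j y with rfl | hjy
      · rw [hxy, pow_zero]
      · have hjx : j ≠ i := fun h => hij h.symm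
        rcases hra i j hij with h | h <;> rw [h]
        · rw [if_pos rfl, if_neg hjx, if_neg hjy, mul_one, pow_two]
          exact permC_mul_self
        · exact pow_zero _
    · rcases eq_or_ne i y with rfl | hiy
      · rcases eq_or_ne j x with rfl | hjx
        · rw [M.symmetric, hxy, pow_zero]
        · have hjy : j ≠ i := fun h => hij h.symm
          rcases hra i j hij with h | h <;> rw [h]
          · rw [if_neg hxyne.symm, if_pos rfl, if_neg hjx, if_neg hjy, mul_one, pow_two]
            exact permS_mul_self
          · exact pow_zero _
      · rcases hra i j hij with h | h <;> rw [h]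
        · rw [if_neg hix, if_neg hiy, one_mul, pow_two]
          exact hsq _ (hmem j)
        · exact pow_zero _

noncomputable def psi [DecidableEq B] (hra : ∀ i j : B, i ≠ j → M i j = 2 ∨ M i j = 0)
    {x y : B} (hxy : M x y = 0) : W →* Equiv.Perm ℤ :=
  cs.lift ⟨fun i => if i = x then permC else if i = y then permS else 1, psi_liftable hra hxy⟩

lemma psi_simple [DecidableEq B] (hra : ∀ i j : B, i ≠ j → M i j = 2 ∨ M i j = 0)
    {x y : B} (hxy : M x y = 0) (i : B) :
    psi cs hra hxy (cs.simple i) = if i = x then permC else if i = y then permS else 1 :=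
  cs.lift_apply_simple _ i

/-- Non-adjacent (`M = 0`) simple reflections do not commute. -/
lemma simple_noncomm (hra : ∀ i j : B, i ≠ j → M i j = 2 ∨ M i j = 0) {x y : B}
    (hxy : M x y = 0) :
    cs.simple x * cs.simple y ≠ cs.simple y * cs.simple x := by
  classical
  have hxyne : x ≠ y := fun h => by simp [h, M.diagonal] at hxy
  intro hc
  have h1 := congrArg (psi cs hra hxy) hc
  rw [map_mul, map_mul, psi_simple, psi_simple, if_pos rfl, if_neg hxyne.symm, if_pos rfl] at h1
  have h2 := congrArg (fun f : Equiv.Perm ℤ => f 0) h1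
  simp [Equiv.Perm.mul_apply] at h2


lemma comm_of_two {i j : B} (h : M i j = 2) :
    cs.simple i * cs.simple j = cs.simple j * cs.simple i := by
  have hp := cs.simple_mul_simple_pow i j
  rw [h, pow_two] at hp
  have : cs.simple i * cs.simple j = (cs.simple i * cs.simple j)⁻¹ :=
    eq_inv_of_mul_eq_one_left hp
  rwa [mul_inv_rev, cs.inv_simple, cs.inv_simple] at this

/-- The key dihedral computation: if `q` is a path all of whose letters are `x` or `y`,
with `M x y = 0`, and `q` ends with `x`, then `s y` does not commute with `π q`. -/
lemma lemD (hra : ∀ i j : B, i ≠ j → M i j = 2 ∨ M i j = 0) {x y : B} (hxy : M x y = 0)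
    (q : List B) (hchain : q.Chain' (fun a b => M a b = 0))
    (hsub : ∀ i ∈ q, i = x ∨ i = y) (hne : q ≠ []) (hlast : q.getLast hne = x) :
    cs.simple y * cs.wordProd q ≠ cs.wordProd q * cs.simple y := by
  classical
  have hxyne : x ≠ y := fun h => by simp [h, M.diagonal] at hxy
  set ψ := psi cs hra hxy with hψ
  have hψx : ψ (cs.simple x) = permC := by rw [hψ, psi_simple, if_pos rfl]
  have hψy : ψ (cs.simple y) = permS := by rw [hψ, psi_simple, if_neg hxyne.symm, if_pos rfl]
  -- classification of ψ (π q)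
  have claim : ∀ q : List B, q.Chain' (fun a b => M a b = 0) →
      (∀ i ∈ q, i = x ∨ i = y) → ∀ (hne : q ≠ []), q.getLast hne = x →
      ((q.head hne = x → ∃ v : ℤ, v ≤ 0 ∧ ∀ n : ℤ, ψ (cs.wordProd q) n = -n + v) ∧
       (q.head hne = y → ∃ v : ℤ, 1 ≤ v ∧ ∀ n : ℤ, ψ (cs.wordProd q) n = n + v)) := by
    intro q
    induction q with
    | nil => intro _ _ hne; exact absurd rfl hne
    | cons a t ih =>
      intro hchain hsub hne hlast
      rcases eq_or_ne t [] with rfl | htne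
      · simp only [getLast_singleton] at hlast
        subst hlast
        constructor
        · intro _
          refine ⟨0, le_refl 0, fun n => ?_⟩
          rw [cs.wordProd_singleton, hψx]
          simp
        · intro hh
          simp only [head_cons] at hh
          exact absurd hh hxyne
      · obtain ⟨b, t', rfl⟩ := exists_cons_of_ne_nil htne
        have hchain2 := isChain_cons_cons.mp hchain
        have hrel : M a b = 0 := hchain2.1
        have hchain' := hchain2.2
        have hsub' : ∀ i ∈ b :: t', i = x ∨ i = y := fun i hi => hsub i (mem_cons_of_mem a hi)
        have hlast' : (b :: t').getLast htne = x := by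
          rwa [getLast_cons htne] at hlast
        have iht := ih hchain' hsub' htne hlast'
        have hahead : b ≠ a := by
          intro h
          rw [h, M.diagonal] at hrel
          exact one_ne_zero hrel
        have hheadmem : b = x ∨ b = y := hsub' _ mem_cons_self
        rcases hsub a mem_cons_self with rfl | rfl
        · -- a = x; b = y
          have hhy : b = y := by
            rcases hheadmem with h | h
            · exact absurd h hahead
            · exact h
          obtain ⟨v, hv, hfor⟩ := iht.2 (by simp [hhy])
          constructor
          · intro _
            refine ⟨-v, by omega, fun n => ?_⟩
            rw [cs.wordProd_cons, map_mul, hψx, Equiv.Perm.mul_apply, hfor]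
            simp
            omega
          · intro hh
            simp only [head_cons] at hh
            exact absurd hh hxyne
        · -- a = y; b = x
          have hhx : b = x := by
            rcases hheadmem with h | h
            · exact h
            · exact absurd h hahead
          obtain ⟨v, hv, hfor⟩ := iht.1 (by simp [hhx])
          constructor
          · intro hh
            simp only [head_cons] at hh
            exact absurd hh.symm hxyne
          · intro _
            refine ⟨1 - v, by omega, fun n => ?_⟩
            rw [cs.wordProd_cons, map_mul, hψy, Equiv.Perm.mul_apply, hfor]
            simp
            omega
  intro hcomm
  have h1 := congrArg ψ hcomm
  rw [map_mul, map_mul, hψy] at h1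
  have hheadmem : q.head hne = x ∨ q.head hne = y := hsub _ (head_mem hne)
  obtain ⟨C1, C2⟩ := claim q hchain hsub hne hlast
  rcases hheadmem with hh | hh
  · obtain ⟨v, hv, hfor⟩ := C1 hh
    have e0 := congrArg (fun f : Equiv.Perm ℤ => f 0) h1
    simp only [Equiv.Perm.mul_apply] at e0
    rw [hfor, hfor] at e0
    simp at e0
    omega
  · obtain ⟨v, hv, hfor⟩ := C2 hh
    have e0 := congrArg (fun f : Equiv.Perm ℤ => f 0) h1
    simp only [Equiv.Perm.mul_apply] at e0
    rw [hfor, hfor] at e0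
    simp at e0
    omega


/-! ### Cancellation helpers -/

lemma simple_conj_conj (i : B) (t : W) :
    cs.simple i * (cs.simple i * t * cs.simple i) * cs.simple i = t := by
  have e : cs.simple i * (cs.simple i * t * cs.simple i) * cs.simple i
      = (cs.simple i * cs.simple i) * t * (cs.simple i * cs.simple i) := by group
  rw [cs.simple_mul_simple_self] at e
  simpa using e

lemma simple_conj_eq_iff (i : B) (t u : W) :
    cs.simple i * t * cs.simple i = u ↔ t = cs.simple i * u * cs.simple i := by
  constructor
  · rintro rfl
    exact (simple_conj_conj cs i t).symm
  · rintro rfl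
    exact simple_conj_conj cs i u

lemma conj_eq_iff (g t u : W) : g * t * g⁻¹ = u ↔ t = g⁻¹ * u * g := by
  constructor
  · rintro rfl; group
  · rintro rfl; group

/-! ### The reflection-sign permutation representation -/

section eps

variable [DecidableEq W]

def epsFun (i : B) : W × ℤˣ → W × ℤˣ :=
  fun p => (cs.simple i * p.1 * cs.simple i, if p.1 = cs.simple i then -p.2 else p.2)

lemma epsFun_invol (i : B) : Function.Involutive (epsFun cs i) := by
  rintro ⟨t, ε⟩
  unfold epsFun
  dsimp only
  refine Prod.ext ?_ ?_
  · exact simple_conj_conj cs i t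
  · dsimp only
    have hc : (cs.simple i * t * cs.simple i = cs.simple i) ↔ t = cs.simple i := by
      rw [simple_conj_eq_iff]
      rw [cs.simple_mul_simple_self, one_mul]  -- σ(σ)σ: (σ*σ)*σ = 1*σ
    rw [if_congr hc rfl rfl]
    split_ifs <;> simp

def epsPerm (i : B) : Equiv.Perm (W × ℤˣ) :=
  Function.Involutive.toPerm _ (epsFun_invol cs i)

lemma epsPerm_apply (i : B) (p : W × ℤˣ) : epsPerm cs i p = epsFun cs i p := rfl

lemma epsPerm_mul_self (i : B) : epsPerm cs i * epsPerm cs i = 1 := by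
  apply Equiv.ext
  intro p
  rw [Equiv.Perm.mul_apply, Equiv.Perm.one_apply, epsPerm_apply, epsPerm_apply]
  exact epsFun_invol cs i p

lemma eps_liftable (hra : ∀ i j : B, i ≠ j → M i j = 2 ∨ M i j = 0) :
    M.IsLiftable (fun i => epsPerm cs i) := by
  intro i j
  dsimp only
  rcases eq_or_ne i j with rfl | hij
  · rw [M.diagonal, pow_one]
    exact epsPerm_mul_self cs i
  · rcases hra i j hij with h2 | h0
    · rw [h2]
      have hcomm := comm_of_two cs h2
      have hiji : cs.simple j * cs.simple i * cs.simple j = cs.simple i := by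
        rw [mul_assoc, hcomm, ← mul_assoc, cs.simple_mul_simple_self, one_mul]
      have hjij : cs.simple i * cs.simple j * cs.simple i = cs.simple j := by
        rw [mul_assoc, ← hcomm, ← mul_assoc, cs.simple_mul_simple_self, one_mul]
      have hpc : epsPerm cs i * epsPerm cs j = epsPerm cs j * epsPerm cs i := by
        apply Equiv.ext
        rintro ⟨t, ε⟩
        simp only [Equiv.Perm.mul_apply, epsPerm_apply, epsFun]
        refine Prod.ext ?_ ?_
        · dsimp only
          have e1 : cs.simple i * (cs.simple j * t * cs.simple j) * cs.simple i
              = (cs.simple i * cs.simple j) * t * (cs.simple j * cs.simple i) := by group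
          have e2 : cs.simple j * (cs.simple i * t * cs.simple i) * cs.simple j
              = (cs.simple j * cs.simple i) * t * (cs.simple i * cs.simple j) := by group
          rw [e1, e2, hcomm]
        · dsimp only
          have hc1 : (cs.simple j * t * cs.simple j = cs.simple i) ↔ t = cs.simple i := by
            rw [simple_conj_eq_iff, hiji]
          have hc2 : (cs.simple i * t * cs.simple i = cs.simple j) ↔ t = cs.simple j := by
            rw [simple_conj_eq_iff, hjij]
          rw [if_congr hc1 rfl rfl, if_congr hc2 rfl rfl]
          split_ifs <;> simp
      rw [pow_two]
      calc (epsPerm cs i * epsPerm cs j) * (epsPerm cs i * epsPerm cs j)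
          = epsPerm cs i * (epsPerm cs j * epsPerm cs i) * epsPerm cs j := by group
        _ = epsPerm cs i * (epsPerm cs i * epsPerm cs j) * epsPerm cs j := by rw [hpc]
        _ = (epsPerm cs i * epsPerm cs i) * (epsPerm cs j * epsPerm cs j) := by group
        _ = 1 := by rw [epsPerm_mul_self, epsPerm_mul_self, one_mul]
    · rw [h0, pow_zero]

noncomputable def eps (hra : ∀ i j : B, i ≠ j → M i j = 2 ∨ M i j = 0) :
    W →* Equiv.Perm (W × ℤˣ) :=
  cs.lift ⟨fun i => epsPerm cs i, eps_liftable cs hra⟩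

lemma eps_simple (hra : ∀ i j : B, i ≠ j → M i j = 2 ∨ M i j = 0) (i : B) :
    eps cs hra (cs.simple i) = epsPerm cs i :=
  cs.lift_apply_simple _ i

lemma eps_wordProd (hra : ∀ i j : B, i ≠ j → M i j = 2 ∨ M i j = 0) (ω : List B)
    (t : W) (ε : ℤˣ) :
    eps cs hra (cs.wordProd ω) (t, ε) =
      (cs.wordProd ω * t * (cs.wordProd ω)⁻¹,
        ε * (-1) ^ ((cs.rightInvSeq ω).count t)) := by
  induction ω generalizing t ε with
  | nil => simp
  | cons i ω ih =>
    rw [cs.wordProd_cons, map_mul, Equiv.Perm.mul_apply, ih, eps_simple, epsPerm_apply]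
    unfold epsFun
    dsimp only
    have hris : cs.rightInvSeq (i :: ω)
        = ((cs.wordProd ω)⁻¹ * cs.simple i * cs.wordProd ω) :: cs.rightInvSeq ω := rfl
    rw [hris]
    have hcond : (cs.wordProd ω * t * (cs.wordProd ω)⁻¹ = cs.simple i)
        ↔ t = (cs.wordProd ω)⁻¹ * cs.simple i * cs.wordProd ω := by
      rw [conj_eq_iff]
    refine Prod.ext ?_ ?_
    · dsimp only
      rw [mul_inv_rev, cs.inv_simple]
      group
    · dsimp only
      rw [if_congr hcond rfl rfl]
      by_cases hc : t = (cs.wordProd ω)⁻¹ * cs.simple i * cs.wordProd ω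
      · subst hc
        rw [if_pos rfl, List.count_cons_self, pow_succ]
        simp [mul_neg]
      · rw [if_neg hc, List.count_cons_of_ne (Ne.symm hc)]


lemma count_parity_eq (hra : ∀ i j : B, i ≠ j → M i j = 2 ∨ M i j = 0) {ω ω' : List B}
    (h : cs.wordProd ω = cs.wordProd ω') (t : W) :
    ((-1 : ℤˣ)) ^ ((cs.rightInvSeq ω).count t) = (-1) ^ ((cs.rightInvSeq ω').count t) := by
  have h1 := eps_wordProd cs hra ω t 1
  have h2 := eps_wordProd cs hra ω' t 1
  rw [h] at h1
  rw [h1] at h2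
  have h3 := congrArg Prod.snd h2
  simpa using h3

lemma mem_rightInvSeq_of_isRightDescent (hra : ∀ i j : B, i ≠ j → M i j = 2 ∨ M i j = 0)
    {ω : List B} (hω : cs.IsReduced ω) {b : B}
    (h : cs.IsRightDescent (cs.wordProd ω) b) : cs.simple b ∈ cs.rightInvSeq ω := by
  by_contra hmem
  have hc0 : (cs.rightInvSeq ω).count (cs.simple b) = 0 := List.count_eq_zero.mpr hmem
  obtain ⟨ω', hω', hw'⟩ := cs.exists_reduced_word' (cs.wordProd ω * cs.simple b)
  have hww : cs.wordProd ω = cs.wordProd (ω'.concat b) := by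
    rw [cs.wordProd_concat, ← hw', mul_assoc, cs.simple_mul_simple_self, mul_one]
  have hpar := count_parity_eq cs hra hww (cs.simple b)
  rw [hc0, pow_zero] at hpar
  have hcc : (cs.rightInvSeq (ω'.concat b)).count (cs.simple b)
      = (cs.rightInvSeq ω').count (cs.simple b) + 1 := by
    rw [cs.rightInvSeq_concat, List.concat_eq_append, List.count_append]
    congr 1
    · have hinj : Function.Injective (⇑(MulAut.conj (cs.simple b))) :=
        (MulAut.conj (cs.simple b)).injective
      have hfix : cs.simple b = (MulAut.conj (cs.simple b)) (cs.simple b) := by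
        simp
      nth_rewrite 1 [hfix]
      rw [List.count_map_of_injective _ _ hinj]
    · simp
  rw [hcc, pow_succ] at hpar
  have hodd : (cs.rightInvSeq ω').count (cs.simple b) ≠ 0 := by
    intro h0; rw [h0, pow_zero, one_mul] at hpar; exact absurd hpar (by decide)
  have hmem' : cs.simple b ∈ cs.rightInvSeq ω' := by
    rw [← List.count_pos_iff]
    exact Nat.pos_of_ne_zero hodd
  have hinv := cs.isRightInversion_of_mem_rightInvSeq hω' hmem'
  have hback : cs.wordProd ω' * cs.simple b = cs.wordProd ω := by
    rw [← hw', mul_assoc, cs.simple_mul_simple_self, mul_one]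
  have h2 := hinv.2
  rw [hback, ← hw'] at h2
  exact absurd h (by unfold CoxeterSystem.IsRightDescent; omega)

end eps

lemma mem_leftInvSeq_of_isLeftDescent (hra : ∀ i j : B, i ≠ j → M i j = 2 ∨ M i j = 0)
    {ω : List B} (hω : cs.IsReduced ω) {b : B}
    (h : cs.IsLeftDescent (cs.wordProd ω) b) : cs.simple b ∈ cs.leftInvSeq ω := by
  classical
  have hrd : cs.IsRightDescent (cs.wordProd ω.reverse) b := by
    unfold CoxeterSystem.IsRightDescent
    unfold CoxeterSystem.IsLeftDescent at h
    rw [cs.wordProd_reverse]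
    have e : (cs.wordProd ω)⁻¹ * cs.simple b = (cs.simple b * cs.wordProd ω)⁻¹ := by
      rw [mul_inv_rev, cs.inv_simple]
    rw [e, cs.length_inv, cs.length_inv]
    exact h
  have hmem := mem_rightInvSeq_of_isRightDescent cs hra ((cs.isReduced_reverse_iff ω).mpr hω) hrd
  rw [cs.rightInvSeq_reverse] at hmem
  exact (List.mem_reverse).mp hmem

lemma descent_structure (hra : ∀ i j : B, i ≠ j → M i j = 2 ∨ M i j = 0)
    {ω : List B} (hω : cs.IsReduced ω) {b : B}
    (h : cs.IsLeftDescent (cs.wordProd ω) b) :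
    ∃ j, ∃ (hj : j < ω.length), ω[j] = b ∧
      cs.simple b * cs.wordProd (ω.take j) = cs.wordProd (ω.take j) * cs.simple b := by
  classical
  have hmem := mem_leftInvSeq_of_isLeftDescent cs hra hω h
  obtain ⟨j, hj, hval⟩ := List.getElem_of_mem hmem
  have hj' : j < ω.length := by
    have := cs.length_leftInvSeq ω
    omega
  have hgetD : (cs.leftInvSeq ω).getD j 1 = cs.simple b := by
    rw [List.getD_eq_getElem _ _ hj, hval]
  rw [cs.getD_leftInvSeq] at hgetD
  rw [List.getElem?_eq_getElem hj'] at hgetD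
  simp only [Option.map_some, Option.getD_some] at hgetD
  have hbj : ω[j] = b := eq_of_simple_eq_conj cs hra hgetD.symm
  rw [hbj] at hgetD
  refine ⟨j, hj', hbj, ?_⟩
  calc cs.simple b * cs.wordProd (ω.take j)
      = (cs.wordProd (ω.take j) * cs.simple b * (cs.wordProd (ω.take j))⁻¹)
          * cs.wordProd (ω.take j) := by rw [hgetD]
    _ = cs.wordProd (ω.take j) * cs.simple b := by group



/-! ### List index helpers -/

lemma getElem_idx_congr {α : Type*} (l : List α) {i j : ℕ} (h : i = j) (hi : i < l.length) :
    l[i] = l[j]'(h ▸ hi) := by subst h; rfl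

lemma getElem_take_helper {α : Type*} (l : List α) (j k : ℕ) (hk : k < j)
    (h1 : k < (l.take j).length) (h2 : k < l.length) : (l.take j)[k] = l[k] := by
  have h := List.getElem?_take_of_lt (l := l) (j := j) (i := k) hk
  rw [List.getElem?_eq_getElem h1, List.getElem?_eq_getElem h2] at h
  exact Option.some_injective _ h

lemma getLast_take_helper {α : Type*} (l : List α) (j : ℕ) (hj0 : 0 < j) (hjle : j ≤ l.length)
    (h : l.take j ≠ []) (hidx : j - 1 < l.length) : (l.take j).getLast h = l[j-1] := by
  have hlt : (l.take j).length = j := by rw [List.length_take]; omega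
  have h1 : some ((l.take j).getLast h) = (l.take j)[(l.take j).length - 1]? := by
    rw [← List.getLast?_eq_getLast h, List.getLast?_eq_getElem?]
  rw [hlt, List.getElem?_take_of_lt (by omega), List.getElem?_eq_getElem hidx] at h1
  exact Option.some_injective _ h1.symm |>.symm

/-! ### The main induction -/

theorem main (hra : ∀ i j : B, i ≠ j → M i j = 2 ∨ M i j = 0) :
    ∀ n : ℕ,
      (∀ p : List B, p.Chain' (fun a b => M a b = 0) → p.length = n → cs.IsReduced p) ∧
      (∀ p : List B, ∀ (hp : p ≠ []), p.Chain' (fun a b => M a b = 0) → p.length = n →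
        ∀ s : B, s ≠ p.head hp → ¬ cs.IsLeftDescent (cs.wordProd p) s) ∧
      (∀ q : List B, ∀ (hq : q ≠ []), q.Chain' (fun a b => M a b = 0) → q.length = n →
        ∀ s : B, M (q.getLast hq) s = 0 →
          cs.simple s * cs.wordProd q ≠ cs.wordProd q * cs.simple s) := by
  intro n
  induction n using Nat.strong_induction_on with
  | _ n IH =>
  -- ———— part (i): path words are reduced ————
  have h1 : ∀ p : List B, p.Chain' (fun a b => M a b = 0) → p.length = n →
      cs.IsReduced p := by
    intro p hchain hlen
    cases p with
    | nil => simp [CoxeterSystem.IsReduced]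
    | cons c t =>
      cases t with
      | nil => simp [CoxeterSystem.IsReduced]
      | cons d t' =>
        have hlc : (c :: d :: t').length = n := hlen
        simp only [List.length_cons] at hlc
        have hlen' : (d :: t').length = n - 1 := by simp; omega
        obtain ⟨ih1, ih2, _⟩ := IH (n-1) (by omega)
        have hch := List.isChain_cons_cons.mp hchain
        have hred := ih1 (d :: t') hch.2 hlen'
        have hcd : c ≠ d := by
          intro h
          rw [h, M.diagonal] at hch
          exact one_ne_zero hch.1
        have hnd := ih2 (d :: t') (by simp) hch.2 hlen' c (by simpa using hcd)
        rw [cs.not_isLeftDescent_iff] at hnd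
        unfold CoxeterSystem.IsReduced at hred ⊢
        rw [cs.wordProd_cons, hnd, hred]
        simp
  -- ———— part (ii): the only possible left descent is the head ————
  have h2 : ∀ p : List B, ∀ (hp : p ≠ []), p.Chain' (fun a b => M a b = 0) → p.length = n →
      ∀ s : B, s ≠ p.head hp → ¬ cs.IsLeftDescent (cs.wordProd p) s := by
    intro p hp hchain hlen s hs hdesc
    have hred := h1 p hchain hlen
    obtain ⟨j, hj, hjb, hcommj⟩ := descent_structure cs hra hred hdesc
    rcases Nat.eq_zero_or_pos j with rfl | hjpos
    · apply hs
      rw [← hjb]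
      exact (List.head_eq_getElem_zero hp).symm
    · have hjlen : (p.take j).length = j := by
        rw [List.length_take]
        omega
      obtain ⟨_, _, ih3⟩ := IH j (by omega)
      have htne : p.take j ≠ [] := by
        intro h
        rw [h] at hjlen
        simp at hjlen
        omega
      have hchaint := hchain.take j
      have hgl : (p.take j).getLast htne = p[j-1]'(by omega) :=
        getLast_take_helper p j hjpos (by omega) htne (by omega)
      have hlastt : M ((p.take j).getLast htne) s = 0 := by
        rw [hgl]
        have hcj := List.isChain_iff_getElem.mp hchain (j-1) (by omega)
        rw [getElem_idx_congr p (show j-1+1 = j by omega), hjb] at hcj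
        exact hcj
      exact ih3 (p.take j) htne hchaint hjlen s hlastt hcommj
  -- ———— part (iii): no generator adjacent to the last letter centralizes ————
  have h3 : ∀ q : List B, ∀ (hq : q ≠ []), q.Chain' (fun a b => M a b = 0) → q.length = n →
      ∀ s : B, M (q.getLast hq) s = 0 →
      cs.simple s * cs.wordProd q ≠ cs.wordProd q * cs.simple s := by
    have aux : ∀ m : ℕ, ∀ q : List B, ∀ (hq : q ≠ []),
        q.Chain' (fun a b => M a b = 0) → q.length = n →
        ∀ s : B, M (q.getLast hq) s = 0 →
        (∀ i (hi : i < q.length), n - 1 - i ≥ m → (q[i] = q.head hq ∨ q[i] = s)) →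
        cs.simple s * cs.wordProd q ≠ cs.wordProd q * cs.simple s := by
      intro m
      induction m with
      | zero =>
        -- all letters lie in {head, s} : the dihedral lemma applies
        intro q hq hchain hlen s hlast hsuf hcomm
        cases q with
        | nil => exact absurd rfl hq
        | cons c t =>
          have hsub : ∀ i ∈ (c :: t), i = c ∨ i = s := by
            intro i hi
            obtain ⟨k, hk, rfl⟩ := List.getElem_of_mem hi
            simpa using hsuf k hk (by omega)
          have hlastcs := hsub _ (List.getLast_mem (l := c :: t) (by simp))
          have hlastc : (c :: t).getLast (by simp) = c := by
            rcases hlastcs with h | h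
            · exact h
            · rw [h, M.diagonal] at hlast
              exact absurd hlast one_ne_zero
          have hcs0 : M c s = 0 := by rw [← hlastc]; exact hlast
          exact lemD cs hra hcs0 (c :: t) hchain hsub (by simp) hlastc hcomm
      | succ m ihm =>
        intro q hq hchain hlen s hlast hsuf
        cases q with
        | nil => exact absurd rfl hq
        | cons c t =>
          by_cases hsc : s = c
          · -- case (a) : s is the head; cancel it
            subst hsc
            cases t with
            | nil =>
              rw [List.getLast_singleton', M.diagonal] at hlast
              exact absurd hlast one_ne_zero
            | cons d t' =>
              intro hcm
              have hcomm' : cs.simple s * cs.wordProd (d :: t')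
                  = cs.wordProd (d :: t') * cs.simple s := by
                have e := hcm
                rw [cs.wordProd_cons, cs.simple_mul_simple_cancel_left] at e
                -- e : π(d::t') = σs * π(d::t') * σs
                nth_rewrite 2 [e]
                rw [mul_assoc, cs.simple_mul_simple_self, mul_one]
              obtain ⟨_, _, ih3⟩ := IH (n-1) (by simp at hlen; omega)
              refine ih3 (d :: t') (by simp) hchain.tail (by simp at hlen ⊢; omega) s ?_ hcomm'
              · have : (s :: d :: t').getLast (by simp) = (d :: t').getLast (by simp) :=
                  List.getLast_cons (by simp)
                rw [← this]
                exact hlast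
          · rcases hra c s (fun h => hsc h.symm) with hM2 | hM0
            · -- case (b) : head commutes with s; cancel it
              cases t with
              | nil =>
                rw [List.getLast_singleton'] at hlast
                rw [hlast] at hM2
                exact absurd hM2 (by norm_num)
              | cons d t' =>
                intro hcm
                have hcsc := comm_of_two cs hM2   -- σc σs = σs σc
                have hcomm' : cs.simple s * cs.wordProd (d :: t')
                    = cs.wordProd (d :: t') * cs.simple s := by
                  have e := hcm
                  rw [cs.wordProd_cons] at e
                  rw [← mul_assoc, ← hcsc, mul_assoc] at e
                  rw [mul_assoc] at e
                  exact mul_left_cancel e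
                obtain ⟨_, _, ih3⟩ := IH (n-1) (by simp at hlen; omega)
                refine ih3 (d :: t') (by simp) hchain.tail (by simp at hlen ⊢; omega) s ?_ hcomm'
                · have : (c :: d :: t').getLast (by simp) = (d :: t').getLast (by simp) :=
                    List.getLast_cons (by simp)
                  rw [← this]
                  exact hlast
            · -- case (c) : the head does not commute with s
              intro hcm
              have hlc : (c :: t).length = n := hlen
              simp only [List.length_cons] at hlc
              have hredq : cs.IsReduced (c :: t) := h1 _ hchain hlen
              have hlq : cs.length (cs.wordProd (c :: t)) = n := by
                rw [hredq, hlen]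
              have hnotd : ¬ cs.IsLeftDescent (cs.wordProd (c :: t)) s :=
                h2 _ (by simp) hchain hlen s (by simpa using hsc)
              rw [cs.not_isLeftDescent_iff, hlq] at hnotd
              have hlen2 : cs.length (cs.wordProd (s :: c :: t)) = n + 1 := by
                rw [cs.wordProd_cons]
                exact hnotd
              have homega : cs.IsReduced (s :: c :: t) := by
                unfold CoxeterSystem.IsReduced
                rw [hlen2]
                simp [hlc]
              have hcd : cs.IsLeftDescent (cs.wordProd (s :: c :: t)) c := by
                unfold CoxeterSystem.IsLeftDescent
                have e1 : cs.simple c * cs.wordProd (s :: c :: t)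
                    = cs.wordProd t * cs.simple s := by
                  rw [cs.wordProd_cons, hcm, cs.wordProd_cons, ← mul_assoc,
                    cs.simple_mul_simple_cancel_left]
                rw [e1, hlen2]
                have hup : cs.length (cs.wordProd t * cs.simple s)
                    ≤ cs.length (cs.wordProd t) + 1 := by
                  have := cs.length_mul_le (cs.wordProd t) (cs.simple s)
                  rwa [cs.length_simple] at this
                have hwt := cs.length_wordProd_le t
                omega
              obtain ⟨j', hj', hj'val, hj'comm⟩ := descent_structure cs hra homega hcd
              rcases Nat.eq_zero_or_pos j' with rfl | hj'pos
              · simp at hj'val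
                exact hsc hj'val
              · obtain ⟨j, rfl⟩ : ∃ j, j' = j + 1 := ⟨j' - 1, by omega⟩
                simp only [List.length_cons] at hj'
                have hjle : j < n := by omega
                have hqj : (c :: t)[j]'(by simp; omega) = c := by
                  simpa using hj'val
                have htake : (s :: c :: t).take (j+1) = s :: (c :: t).take j := rfl
                rw [htake] at hj'comm
                rcases Nat.eq_zero_or_pos j with rfl | hjpos
                · -- r = [s] : σc commutes with σs , impossible
                  simp only [List.take_zero] at hj'comm
                  rw [cs.wordProd_singleton] at hj'comm
                  exact simple_noncomm cs hra hM0 hj'comm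
                · -- r = s :: (c::t).take j
                  have htlen : ((c :: t).take j).length = j := by
                    rw [List.length_take]
                    omega
                  have htne : (c :: t).take j ≠ [] := by
                    intro h
                    rw [h] at htlen
                    simp at htlen
                    omega
                  have hrne : (s :: (c :: t).take j) ≠ [] := by simp
                  have hrlen : (s :: (c :: t).take j).length = j + 1 := by
                    simp [htlen]
                  have hheadt : ((c :: t).take j).head htne = c := by
                    obtain ⟨j'', rfl⟩ : ∃ j'', j = j'' + 1 := ⟨j - 1, by omega⟩
                    rfl
                  have hheadq : ((c :: t).take j).head? = some c := by
                    rw [List.head?_eq_head htne, hheadt]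
                  have hrchain : (s :: (c :: t).take j).Chain' (fun a b => M a b = 0) := by
                    apply List.isChain_cons.mpr
                    refine ⟨?_, hchain.take j⟩
                    intro x hx
                    rw [hheadq, Option.mem_some_iff] at hx
                    subst hx
                    rw [M.symmetric]
                    exact hM0
                  have hglr : (s :: (c :: t).take j).getLast hrne
                      = (c :: t)[j-1]'(by simp; omega) := by
                    rw [List.getLast_cons htne]
                    exact getLast_take_helper (c :: t) j hjpos (by simp; omega) htne
                      (by simp; omega)
                  have hrlast : M ((s :: (c :: t).take j).getLast hrne) c = 0 := by
                    rw [hglr]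
                    have hcj := List.isChain_iff_getElem.mp hchain (j-1) (by simp; omega)
                    rw [getElem_idx_congr (c :: t) (show j-1+1 = j by omega), hqj] at hcj
                    exact hcj
                  rcases lt_or_eq_of_le (Nat.succ_le_of_lt hjle) with hlt | heq
                  · -- non-boundary : strictly shorter word, outer induction
                    obtain ⟨_, _, ih3⟩ := IH (j+1) hlt
                    exact ih3 _ hrne hrchain hrlen c hrlast hj'comm
                  · -- boundary : j + 1 = n ; use the inner induction
                    refine ihm (s :: (c :: t).take j) hrne hrchain (by omega) c hrlast ?_
                      hj'comm
                    intro i hi hdist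
                    rcases Nat.eq_zero_or_pos i with rfl | hipos
                    · left
                      rfl
                    · obtain ⟨k, rfl⟩ : ∃ k, i = k + 1 := ⟨i - 1, by omega⟩
                      simp only [List.length_cons] at hi
                      have hkj : k < j := by omega
                      have hkn : k < (c :: t).length := by simp; omega
                      have hget : (s :: (c :: t).take j)[k+1] = (c :: t)[k] := by
                        rw [List.getElem_cons_succ]
                        exact getElem_take_helper (c :: t) j k hkj (by omega) hkn
                      have hcs := hsuf k hkn (by omega)
                      simp only [List.head_cons] at hcs
                      rw [hget]
                      rcases hcs with h | h
                      · right
                        exact h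
                      · left
                        rw [h]
                        rfl
    intro q hq hchain hlen s hlast
    exact aux n q hq hchain hlen s hlast (fun i hi h => absurd h (by omega))
  exact ⟨h1, h2, h3⟩

end Stmt7Aux

/-- If `g = s₁⋯sₙ` is a closed path in the Coxeter diagram of a right-angled, finite rank
Coxeter system covering the whole graph, then `|s·g| > |g|` for every generator `s ≠ s₁`. -/
theorem stmt7 {B W : Type*} [Fintype B] [Group W] {M : CoxeterMatrix B}
    (cs : CoxeterSystem M W)
    (hra : ∀ i j : B, i ≠ j → M i j = 2 ∨ M i j = 0)
    (l : List B) (hne : l ≠ [])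
    (hpath : List.Chain' (fun a b => M a b = 0) l)
    (hclosed : M (l.head hne) (l.getLast hne) = 0)
    (hcover : ∀ b : B, b ∈ l) :
    ∀ b : B, b ≠ l.head hne →
      cs.length (cs.simple b * cs.wordProd l) > cs.length (cs.wordProd l) := by
  intro b hb
  obtain ⟨h1, h2, _⟩ := Stmt7Aux.main cs hra l.length
  have hnd := h2 l hne hpath rfl b hb
  rw [cs.not_isLeftDescent_iff] at hnd
  rw [hnd]
  omega
end

section
/- Let (W,S) be a finite rank Coxeter system and q ∈ ℝ_{>0}^S a multi-parameter (with q_s = q_t for conjugate s,t). If the series ∑_{w∈W} q_w converges, then there exists λ > 1 such that ∑_{w∈W} q_w λ^{|w|} converges; in particular, the set {q ∈ ℝ_{>0}^S : ∑_{w∈W} q_w < ∞} is open in ℝ_{>0}^S. -/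
private lemma list_prod_map_nonneg {B : Type*} (p : B → ℝ) (hp : ∀ b, 0 ≤ p b) :
    ∀ ω : List B, 0 ≤ (ω.map p).prod := by
  intro ω
  induction ω with
  | nil => simp
  | cons a l ih =>
    simp only [List.map_cons, List.prod_cons]
    exact mul_nonneg (hp a) ih

private lemma list_prod_map_le {B : Type*} (p r : B → ℝ) (hp : ∀ b, 0 ≤ p b)
    (h : ∀ b, p b ≤ r b) : ∀ ω : List B, (ω.map p).prod ≤ (ω.map r).prod := by
  intro ω
  induction ω with
  | nil => simp
  | cons a l ih =>
    simp only [List.map_cons, List.prod_cons]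
    exact mul_le_mul (h a) ih (list_prod_map_nonneg p hp l) ((hp a).trans (h a))

private lemma list_prod_map_scale {B : Type*} (p : B → ℝ) (c : ℝ) :
    ∀ ω : List B, (ω.map fun b => c * p b).prod = c ^ ω.length * (ω.map p).prod := by
  intro ω
  induction ω with
  | nil => simp
  | cons a l ih =>
    simp only [List.map_cons, List.prod_cons, List.length_cons, ih, pow_succ]
    ring

private lemma growth_aux {B W : Type*} [Fintype B] [Group W] {M : CoxeterMatrix B}
    (cs : CoxeterSystem M W) (f : W → ℝ)
    (hpos : ∀ w, 0 < f w)
    (hmul : ∀ u v : W, cs.length (u * v) = cs.length u + cs.length v →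
      f (u * v) = f u * f v)
    (hsum : Summable f) :
    ∃ lam : ℝ, 1 < lam ∧ Summable fun w : W => f w * lam ^ cs.length w := by
  classical
  -- spheres are finite
  have hfin : ∀ n : ℕ, {w : W | cs.length w = n}.Finite := by
    intro n
    apply Set.Finite.subset
      (Set.finite_range fun v : Fin n → B => cs.wordProd (List.ofFn v))
    intro w hw
    obtain ⟨ω, hlen, rfl⟩ := cs.exists_reduced_word w
    have hn : ω.length = n := hlen.eq.symm.trans hw
    subst hn
    exact ⟨fun i => ω.get i, congrArg cs.wordProd (List.ofFn_get ω)⟩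
  have ha0 : ∀ n : ℕ, (0:ℝ) ≤ ∑ w ∈ (hfin n).toFinset, f w :=
    fun n => Finset.sum_nonneg fun w _ => (hpos w).le
  -- splitting elements of length m + n
  have hsplit : ∀ m n (w : W), cs.length w = m + n →
      ∃ u v : W, cs.length u = m ∧ cs.length v = n ∧ w = u * v ∧ f w = f u * f v := by
    intro m n w hw
    obtain ⟨ω, hlen, rfl⟩ := cs.exists_reduced_word w
    have hωlen : ω.length = m + n := hlen.eq.symm.trans hw
    have huv : cs.wordProd ω = cs.wordProd (ω.take m) * cs.wordProd (ω.drop m) := by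
      rw [← cs.wordProd_append, List.take_append_drop]
    have hul : cs.length (cs.wordProd (ω.take m)) ≤ m := by
      have h := cs.length_wordProd_le (ω.take m)
      rwa [List.length_take, min_eq_left (by omega)] at h
    have hvl : cs.length (cs.wordProd (ω.drop m)) ≤ n := by
      have h := cs.length_wordProd_le (ω.drop m)
      rwa [List.length_drop, hωlen, Nat.add_sub_cancel_left] at h
    have htot : m + n ≤ cs.length (cs.wordProd (ω.take m))
        + cs.length (cs.wordProd (ω.drop m)) :=
      calc m + n = cs.length (cs.wordProd ω) := hw.symm
        _ = cs.length (cs.wordProd (ω.take m) * cs.wordProd (ω.drop m)) := by rw [huv]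
        _ ≤ _ := cs.length_mul_le _ _
    have hu : cs.length (cs.wordProd (ω.take m)) = m := by omega
    have hv : cs.length (cs.wordProd (ω.drop m)) = n := by omega
    refine ⟨_, _, hu, hv, huv, ?_⟩
    rw [huv]
    exact hmul _ _ (by rw [hu, hv, ← huv, hw])
  -- submultiplicativity of sphere sums
  have hsub : ∀ m n : ℕ, ∑ w ∈ (hfin (m + n)).toFinset, f w ≤
      (∑ w ∈ (hfin m).toFinset, f w) * ∑ w ∈ (hfin n).toFinset, f w := by
    intro m n
    have hex : ∀ w ∈ (hfin (m + n)).toFinset, ∃ pr : W × W,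
        pr.1 ∈ (hfin m).toFinset ∧ pr.2 ∈ (hfin n).toFinset ∧ w = pr.1 * pr.2 ∧
          f w = f pr.1 * f pr.2 := by
      intro w hw
      rw [(hfin _).mem_toFinset] at hw
      obtain ⟨u, v, h1, h2, h3, h4⟩ := hsplit m n w hw
      exact ⟨(u, v), (hfin m).mem_toFinset.mpr h1, (hfin n).mem_toFinset.mpr h2, h3, h4⟩
    choose φ h1 h2 h3 h4 using hex
    calc ∑ w ∈ (hfin (m + n)).toFinset, f w
        = ∑ w ∈ (hfin (m + n)).toFinset.attach, f w.1 :=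
          (Finset.sum_attach _ _).symm
      _ = ∑ w ∈ (hfin (m + n)).toFinset.attach, f (φ w.1 w.2).1 * f (φ w.1 w.2).2 :=
          Finset.sum_congr rfl fun w _ => h4 w.1 w.2
      _ = ∑ pr ∈ (hfin (m + n)).toFinset.attach.image (fun w => φ w.1 w.2),
            f pr.1 * f pr.2 := by
          rw [Finset.sum_image]
          intro x hx y hy hxy
          have hxy' : (x : W) = y := by rw [h3 x.1 x.2, h3 y.1 y.2, show φ x.1 x.2 = φ y.1 y.2 from hxy]
          exact Subtype.ext hxy'
      _ ≤ ∑ pr ∈ (hfin m).toFinset ×ˢ (hfin n).toFinset, f pr.1 * f pr.2 := by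
          apply Finset.sum_le_sum_of_subset_of_nonneg
          · intro pr hpr
            obtain ⟨w, hw, rfl⟩ := Finset.mem_image.mp hpr
            exact Finset.mem_product.mpr ⟨h1 w.1 w.2, h2 w.1 w.2⟩
          · intro pr _ _
            exact mul_nonneg (hpos _).le (hpos _).le
      _ = (∑ w ∈ (hfin m).toFinset, f w) * ∑ w ∈ (hfin n).toFinset, f w := by
          rw [Finset.sum_product]
          exact (Finset.sum_mul_sum _ _ _ _).symm
  -- spheres are pairwise disjoint
  have hdisj : ∀ K : ℕ, (↑(Finset.range K) : Set ℕ).PairwiseDisjoint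
      (fun n => (hfin n).toFinset) := by
    intro K m _ n _ hmn
    apply Finset.disjoint_left.mpr
    intro w hm hn
    rw [(hfin m).mem_toFinset] at hm
    rw [(hfin n).mem_toFinset] at hn
    exact hmn (hm ▸ hn ▸ rfl)
  -- the sphere sums form a summable sequence
  have hsa : Summable (fun n : ℕ => ∑ w ∈ (hfin n).toFinset, f w) := by
    apply summable_of_sum_range_le ha0
    intro K
    rw [← Finset.sum_biUnion (hdisj K)]
    exact Summable.sum_le_tsum _ (fun w _ => (hpos w).le) hsum
  have hten := hsa.tendsto_atTop_zero
  obtain ⟨N, hN⟩ := (hten.eventually (eventually_lt_nhds (zero_lt_one (α := ℝ)))).exists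
  -- N is positive
  have hf1 : f 1 = 1 := by
    have h := hmul 1 1 (by simp)
    rw [mul_one] at h
    nlinarith [hpos 1]
  have hNpos : 0 < N := by
    rcases Nat.eq_zero_or_pos N with h0 | h
    · exfalso
      subst h0
      have hmem1 : (1 : W) ∈ (hfin 0).toFinset := (hfin 0).mem_toFinset.mpr cs.length_one
      have h1le : (1:ℝ) ≤ ∑ w ∈ (hfin 0).toFinset, f w := by
        calc (1:ℝ) = f 1 := hf1.symm
          _ ≤ _ := Finset.single_le_sum (fun w _ => (hpos w).le) hmem1
      linarith
    · exact h
  -- choose lambda > 1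
  have hcont : ContinuousAt (fun l : ℝ => l ^ N * ∑ w ∈ (hfin N).toFinset, f w) 1 := by
    fun_prop
  have hev : ∀ᶠ l in nhds (1:ℝ), l ^ N * ∑ w ∈ (hfin N).toFinset, f w < 1 := by
    apply hcont.eventually (eventually_lt_nhds ?_)
    simpa using hN
  obtain ⟨lam, hblt, hlam⟩ :=
    (((hev.filter_mono (nhdsWithin_le_nhds (s := Set.Ioi (1:ℝ)))).and
      eventually_mem_nhdsWithin)).exists
  rw [Set.mem_Ioi] at hlam
  have hlampos : (0:ℝ) < lam := lt_trans zero_lt_one hlam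
  refine ⟨lam, hlam, ?_⟩
  set b : ℝ := lam ^ N * ∑ w ∈ (hfin N).toFinset, f w with hbdef
  have hbnn : 0 ≤ b := mul_nonneg (pow_nonneg hlampos.le _) (ha0 N)
  -- iterated submultiplicativity
  have hiter : ∀ k j : ℕ, ∑ w ∈ (hfin (k * N + j)).toFinset, f w ≤
      (∑ w ∈ (hfin N).toFinset, f w) ^ k * ∑ w ∈ (hfin j).toFinset, f w := by
    intro k j
    induction k with
    | zero => simp
    | succ k ih =>
      have heq : (k + 1) * N + j = N + (k * N + j) := by ring
      rw [heq]
      calc ∑ w ∈ (hfin (N + (k * N + j))).toFinset, f w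
          ≤ (∑ w ∈ (hfin N).toFinset, f w) * ∑ w ∈ (hfin (k * N + j)).toFinset, f w :=
            hsub N (k * N + j)
        _ ≤ (∑ w ∈ (hfin N).toFinset, f w) *
              ((∑ w ∈ (hfin N).toFinset, f w) ^ k * ∑ w ∈ (hfin j).toFinset, f w) :=
            mul_le_mul_of_nonneg_left ih (ha0 N)
        _ = (∑ w ∈ (hfin N).toFinset, f w) ^ (k + 1) * ∑ w ∈ (hfin j).toFinset, f w := by
            ring
  set C : ℝ := ∑ j ∈ Finset.range N, lam ^ j * ∑ w ∈ (hfin j).toFinset, f w with hCdef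
  have hC0 : 0 ≤ C :=
    Finset.sum_nonneg fun j _ => mul_nonneg (pow_nonneg hlampos.le _) (ha0 j)
  have blocksum : ∀ k : ℕ,
      ∑ j ∈ Finset.range N, lam ^ (k * N + j) * ∑ w ∈ (hfin (k * N + j)).toFinset, f w
        ≤ b ^ k * C := by
    intro k
    rw [hCdef, Finset.mul_sum]
    apply Finset.sum_le_sum
    intro j _
    calc lam ^ (k * N + j) * ∑ w ∈ (hfin (k * N + j)).toFinset, f w
        ≤ lam ^ (k * N + j) *
            ((∑ w ∈ (hfin N).toFinset, f w) ^ k * ∑ w ∈ (hfin j).toFinset, f w) :=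
          mul_le_mul_of_nonneg_left (hiter k j) (pow_nonneg hlampos.le _)
      _ = b ^ k * (lam ^ j * ∑ w ∈ (hfin j).toFinset, f w) := by
          rw [hbdef, pow_add, pow_mul, mul_pow]
          ring
  -- reindexing
  have reindex : ∀ (h : ℕ → ℝ) (K : ℕ),
      ∑ n ∈ Finset.range (K * N), h n
        = ∑ k ∈ Finset.range K, ∑ j ∈ Finset.range N, h (k * N + j) := by
    intro h K
    rw [← Finset.sum_product']
    refine Finset.sum_nbij' (fun n => (n / N, n % N)) (fun pr => pr.1 * N + pr.2)
      ?_ ?_ ?_ ?_ ?_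
    · intro n hn
      rw [Finset.mem_range] at hn
      rw [Finset.mem_product, Finset.mem_range, Finset.mem_range]
      exact ⟨(Nat.div_lt_iff_lt_mul hNpos).mpr hn, Nat.mod_lt _ hNpos⟩
    · intro pr hpr
      rw [Finset.mem_product, Finset.mem_range, Finset.mem_range] at hpr
      rw [Finset.mem_range]
      calc pr.1 * N + pr.2 < pr.1 * N + N := by omega
        _ = (pr.1 + 1) * N := by ring
        _ ≤ K * N := Nat.mul_le_mul_right _ hpr.1
    · intro n _
      show n / N * N + n % N = n
      exact Nat.div_add_mod' n N
    · intro pr hpr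
      rw [Finset.mem_product, Finset.mem_range, Finset.mem_range] at hpr
      have h1 : (pr.1 * N + pr.2) / N = pr.1 := by
        rw [add_comm, Nat.add_mul_div_right _ _ hNpos, Nat.div_eq_of_lt hpr.2, zero_add]
      have h2 : (pr.1 * N + pr.2) % N = pr.2 := by
        rw [add_comm, Nat.add_mul_mod_self_right, Nat.mod_eq_of_lt hpr.2]
      show ((pr.1 * N + pr.2) / N, (pr.1 * N + pr.2) % N) = pr
      rw [h1, h2]
    · intro n _
      show h n = h (n / N * N + n % N)
      rw [Nat.div_add_mod' n N]
  -- final bound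
  apply summable_of_sum_le (c := (1 - b)⁻¹ * C)
    (fun w => mul_nonneg (hpos w).le (pow_nonneg hlampos.le _))
  intro F
  set K : ℕ := F.sup cs.length + 1 with hKdef
  have hsubF : F ⊆ (Finset.range (K * N)).biUnion (fun n => (hfin n).toFinset) := by
    intro w hw
    apply Finset.mem_biUnion.mpr
    refine ⟨cs.length w, Finset.mem_range.mpr ?_, (hfin _).mem_toFinset.mpr rfl⟩
    calc cs.length w < K := Nat.lt_succ_of_le (Finset.le_sup hw)
      _ ≤ K * N := Nat.le_mul_of_pos_right _ hNpos
  calc ∑ w ∈ F, f w * lam ^ cs.length w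
      ≤ ∑ w ∈ (Finset.range (K * N)).biUnion (fun n => (hfin n).toFinset),
          f w * lam ^ cs.length w :=
        Finset.sum_le_sum_of_subset_of_nonneg hsubF
          (fun w _ _ => mul_nonneg (hpos w).le (pow_nonneg hlampos.le _))
    _ = ∑ n ∈ Finset.range (K * N), ∑ w ∈ (hfin n).toFinset, f w * lam ^ cs.length w :=
        Finset.sum_biUnion (hdisj (K * N))
    _ = ∑ n ∈ Finset.range (K * N), lam ^ n * ∑ w ∈ (hfin n).toFinset, f w := by
        apply Finset.sum_congr rfl
        intro n _
        rw [Finset.mul_sum]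
        apply Finset.sum_congr rfl
        intro w hw
        rw [(hfin n).mem_toFinset] at hw
        rw [hw]
        ring
    _ = ∑ k ∈ Finset.range K, ∑ j ∈ Finset.range N,
          lam ^ (k * N + j) * ∑ w ∈ (hfin (k * N + j)).toFinset, f w :=
        reindex _ K
    _ ≤ ∑ k ∈ Finset.range K, b ^ k * C :=
        Finset.sum_le_sum fun k _ => blocksum k
    _ = (∑ k ∈ Finset.range K, b ^ k) * C := by rw [Finset.sum_mul]
    _ ≤ (1 - b)⁻¹ * C := by
        apply mul_le_mul_of_nonneg_right ?_ hC0
        have hle := Summable.sum_le_tsum (Finset.range K) (fun k _ => pow_nonneg hbnn k)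
          (summable_geometric_of_lt_one hbnn hblt)
        rwa [tsum_geometric_of_lt_one hbnn hblt] at hle

/-- If the multi-parameter growth series `∑_{w ∈ W} q_w` of a finite rank Coxeter system
converges, then it still converges after rescaling by some `λ > 1`; in particular the set of
positive multi-parameters with convergent growth series is open in `ℝ_{>0}^S`. Here
`Q p w = p_w` denotes the weight of `w` with respect to the parameter tuple `p`. -/
theorem stmt10 {B W : Type*} [Fintype B] [Group W] {M : CoxeterMatrix B}
    (cs : CoxeterSystem M W)
    (Q : (B → ℝ) → W → ℝ)
    (hQ : ∀ (p : B → ℝ) (w : W) (ω : List B), cs.wordProd ω = w → ω.length = cs.length w →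
      Q p w = (ω.map p).prod)
    (q : B → ℝ) (hq : ∀ b, 0 < q b)
    (hconj : ∀ s t : B, IsConj (cs.simple s) (cs.simple t) → q s = q t) :
    (Summable (Q q) → ∃ lam : ℝ, 1 < lam ∧
        Summable (fun w : W => Q q w * lam ^ cs.length w)) ∧
      IsOpen {p : B → ℝ | (∀ b, 0 < p b) ∧ Summable (Q p)} := by
  have hQpos : ∀ (p : B → ℝ), (∀ b, 0 < p b) → ∀ w : W, 0 < Q p w := by
    intro p hp w
    obtain ⟨ω, hlen, rfl⟩ := cs.exists_reduced_word w
    rw [hQ p _ ω rfl hlen.eq.symm]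
    apply List.prod_pos
    intro x hx
    obtain ⟨b, -, rfl⟩ := List.mem_map.mp hx
    exact hp b
  have hQmul : ∀ (p : B → ℝ) (u v : W), cs.length (u * v) = cs.length u + cs.length v →
      Q p (u * v) = Q p u * Q p v := by
    intro p u v h
    obtain ⟨ωu, hu, rfl⟩ := cs.exists_reduced_word u
    obtain ⟨ωv, hv, rfl⟩ := cs.exists_reduced_word v
    rw [hQ p _ (ωu ++ ωv) (cs.wordProd_append ωu ωv)
        (by rw [List.length_append]; have := hu.eq; have := hv.eq; omega),
      hQ p _ ωu rfl hu.eq.symm, hQ p _ ωv rfl hv.eq.symm, List.map_append, List.prod_append]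
  constructor
  · intro hs
    exact growth_aux cs (Q q) (hQpos q hq) (hQmul q) hs
  · rw [isOpen_iff_mem_nhds]
    rintro p₀ ⟨hp₀, hsum₀⟩
    obtain ⟨lam, hlam, hsl⟩ := growth_aux cs (Q p₀) (hQpos p₀ hp₀) (hQmul p₀) hsum₀
    have hU : IsOpen (⋂ b : B, (fun p : B → ℝ => p b) ⁻¹' Set.Ioo 0 (lam * p₀ b)) :=
      isOpen_iInter_of_finite fun b => isOpen_Ioo.preimage (continuous_apply b)
    apply Filter.mem_of_superset (hU.mem_nhds ?_)
    · intro p hp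
      simp only [Set.mem_iInter, Set.mem_preimage, Set.mem_Ioo] at hp
      have hppos : ∀ b, 0 < p b := fun b => (hp b).1
      refine ⟨hppos, ?_⟩
      apply Summable.of_nonneg_of_le (fun w => (hQpos p hppos w).le) ?_ hsl
      intro w
      obtain ⟨ω, hlen, rfl⟩ := cs.exists_reduced_word w
      rw [hQ p _ ω rfl hlen.eq.symm, hQ p₀ _ ω rfl hlen.eq.symm, hlen.eq]
      calc (ω.map p).prod ≤ (ω.map fun b => lam * p₀ b).prod :=
            list_prod_map_le p _ (fun b => (hppos b).le) (fun b => (hp b).2.le) ω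
        _ = lam ^ ω.length * (ω.map p₀).prod := list_prod_map_scale p₀ lam ω
        _ = (ω.map p₀).prod * lam ^ ω.length := mul_comm _ _
    · simp only [Set.mem_iInter, Set.mem_preimage, Set.mem_Ioo]
      intro b
      exact ⟨hp₀ b, (lt_mul_iff_one_lt_left (hp₀ b)).mpr hlam⟩
end

section
/- Let (W,S) be a Coxeter system, q ∈ ℝ_{>0}^S, and w ∈ W with reduced expression w = s₁...sₙ. Then in the Hecke algebra represented on ℓ²(W), the operator inequality ∏_{i=1}^n min{q_{sᵢ}, q_{sᵢ}^{−1}} ≤ (T_w^{(q)})^∗ T_w^{(q)} ≤ ∏_{i=1}^n max{q_{sᵢ}, q_{sᵢ}^{−1}} holds. In particular T_w^{(q)} is invertible with ‖T_w^{(q)}‖ ≤ ∏ᵢ max{q_{sᵢ}^{1/2}, q_{sᵢ}^{−1/2}} and ‖(T_w^{(q)})^{−1}‖ ≤ ∏ᵢ max{q_{sᵢ}^{1/2}, q_{sᵢ}^{−1/2}}. -/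
section Aux

open ContinuousLinearMap RCLike

/-- Two continuous linear maps out of `ℓ²(W)` agreeing on the standard basis agree. -/
theorem clm_ext_singles {W : Type*} [DecidableEq W] {F : Type*} [NormedAddCommGroup F]
    [NormedSpace ℂ F]
    (A B : lp (fun _ : W => ℂ) 2 →L[ℂ] F)
    (h : ∀ w : W, A (lp.single 2 w 1) = B (lp.single 2 w 1)) : A = B := by
  ext f
  have hf : HasSum (fun i : W => lp.single 2 i (f i)) f :=
    lp.hasSum_single (by norm_num) f
  have hA : HasSum (fun i : W => A (lp.single 2 i (f i))) (A f) := hf.mapL A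
  have hB : HasSum (fun i : W => B (lp.single 2 i (f i))) (B f) := hf.mapL B
  refine hA.unique ?_
  convert hB using 2 with i
  have h1 : lp.single (E := fun _ : W => ℂ) 2 i (f i) = f i • lp.single 2 i (1:ℂ) := by
    rw [← lp.single_smul]; norm_num
  rw [h1, map_smul, map_smul, h]

theorem inner_delta {W : Type*} [DecidableEq W] (v u : W) :
    (inner ℂ (lp.single 2 v (1:ℂ) : lp (fun _ : W => ℂ) 2) (lp.single 2 u (1:ℂ)) : ℂ)
      = if v = u then 1 else 0 := by
  rw [lp.inner_single_left]
  by_cases h : v = u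
  · subst h; simp [lp.single_apply_self]
  · simp [h, lp.single_apply_ne _ _ _ h]

theorem real_key (a n u : ℝ) (ha : 0 < a)
    (key : ∀ t : ℝ, 0 ≤ ((a - a⁻¹) * u + n) + 2 * t * u + t ^ 2 * n) :
    min (a ^ 2) (a ^ 2)⁻¹ * n ≤ (a - a⁻¹) * u + n ∧
      (a - a⁻¹) * u + n ≤ max (a ^ 2) (a ^ 2)⁻¹ * n := by
  have hane : a ≠ 0 := ha.ne'
  have hpos : 0 < a + a⁻¹ := by positivity
  rcases le_total 1 a with h1 | h1
  · have hinv : a⁻¹ ≤ a := by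
      calc a⁻¹ ≤ 1 := inv_le_one_of_one_le₀ h1
      _ ≤ a := h1
    have hminmax : min (a ^ 2) (a ^ 2)⁻¹ = (a ^ 2)⁻¹ ∧ max (a ^ 2) (a ^ 2)⁻¹ = a ^ 2 := by
      have : (a ^ 2)⁻¹ ≤ a ^ 2 := by
        have := mul_le_mul hinv hinv (by positivity) ha.le
        calc (a^2)⁻¹ = a⁻¹ * a⁻¹ := by rw [sq, mul_inv]
        _ ≤ a * a := this
        _ = a ^ 2 := (sq a).symm
      exact ⟨min_eq_right this, max_eq_left this⟩
    rw [hminmax.1, hminmax.2]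
    have hc : 0 ≤ a - a⁻¹ := sub_nonneg.2 hinv
    constructor
    · have k := key a⁻¹
      have h2 : 0 ≤ (a - a⁻¹) * (((a - a⁻¹) * u + n) + 2 * a⁻¹ * u + (a⁻¹) ^ 2 * n) :=
        mul_nonneg hc k
      have expand : (a + a⁻¹) * (((a - a⁻¹) * u + n) - (a ^ 2)⁻¹ * n)
          = (a - a⁻¹) * (((a - a⁻¹) * u + n) + 2 * a⁻¹ * u + (a⁻¹) ^ 2 * n) := by
        field_simp
        ring
      nlinarith [mul_pos hpos hpos]
    · have k := key (-a)
      have h2 : 0 ≤ (a - a⁻¹) * (((a - a⁻¹) * u + n) + 2 * (-a) * u + (-a) ^ 2 * n) :=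
        mul_nonneg hc k
      have expand : (a + a⁻¹) * (a ^ 2 * n - ((a - a⁻¹) * u + n))
          = (a - a⁻¹) * (((a - a⁻¹) * u + n) + 2 * (-a) * u + (-a) ^ 2 * n) := by
        field_simp
        ring
      nlinarith [mul_pos hpos hpos]
  · have hinv : a ≤ a⁻¹ := by
      calc a ≤ 1 := h1
      _ ≤ a⁻¹ := (one_le_inv₀ ha).2 h1
    have hminmax : min (a ^ 2) (a ^ 2)⁻¹ = a ^ 2 ∧ max (a ^ 2) (a ^ 2)⁻¹ = (a ^ 2)⁻¹ := by
      have : a ^ 2 ≤ (a ^ 2)⁻¹ := by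
        have := mul_le_mul hinv hinv ha.le (by positivity)
        calc a ^ 2 = a * a := sq a
        _ ≤ a⁻¹ * a⁻¹ := this
        _ = (a ^ 2)⁻¹ := by rw [sq, mul_inv]
      exact ⟨min_eq_left this, max_eq_right this⟩
    rw [hminmax.1, hminmax.2]
    have hc : 0 ≤ a⁻¹ - a := sub_nonneg.2 hinv
    constructor
    · have k := key (-a)
      have h2 : 0 ≤ (a⁻¹ - a) * (((a - a⁻¹) * u + n) + 2 * (-a) * u + (-a) ^ 2 * n) :=
        mul_nonneg hc k
      have expand : (a + a⁻¹) * (((a - a⁻¹) * u + n) - a ^ 2 * n)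
          = (a⁻¹ - a) * (((a - a⁻¹) * u + n) + 2 * (-a) * u + (-a) ^ 2 * n) := by
        field_simp
        ring
      nlinarith [mul_pos hpos hpos]
    · have k := key a⁻¹
      have h2 : 0 ≤ (a⁻¹ - a) * (((a - a⁻¹) * u + n) + 2 * a⁻¹ * u + (a⁻¹) ^ 2 * n) :=
        mul_nonneg hc k
      have expand : (a + a⁻¹) * ((a ^ 2)⁻¹ * n - ((a - a⁻¹) * u + n))
          = (a⁻¹ - a) * (((a - a⁻¹) * u + n) + 2 * a⁻¹ * u + (a⁻¹) ^ 2 * n) := by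
        field_simp
        ring
      nlinarith [mul_pos hpos hpos]

variable {H : Type*} [NormedAddCommGroup H] [InnerProductSpace ℂ H] [CompleteSpace H]

theorem sa_real_smul_one (r : ℝ) : IsSelfAdjoint (((r : ℝ) : ℂ) • (1 : H →L[ℂ] H)) :=
  IsSelfAdjoint.smul (by simp [IsSelfAdjoint]) (IsSelfAdjoint.one _)

theorem re_inner_smul_one (r : ℝ) (x : H) :
    re ((inner ℂ ((((r : ℝ) : ℂ) • (1 : H →L[ℂ] H)) x) x : ℂ)) = r * ‖x‖ ^ 2 := by
  rw [smul_apply, one_apply_eq_self, inner_smul_left, Complex.conj_ofReal]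
  simp [Complex.re_ofReal_mul]
  left
  simpa using inner_self_eq_norm_sq (𝕜 := ℂ) x

theorem re_adjoint_mul (T : H →L[ℂ] H) (x : H) :
    re ((inner ℂ ((adjoint T * T) x) x : ℂ)) = ‖T x‖ ^ 2 := by
  rw [mul_apply_eq_comp, adjoint_inner_left]
  exact inner_self_eq_norm_sq (T x)

theorem norm_sq_T (T : H →L[ℂ] H) (hsa : IsSelfAdjoint T) (p : ℝ)
    (hquad : T * T = ((p : ℝ) : ℂ) • T + 1) (x : H) :
    ‖T x‖ ^ 2 = p * re ((inner ℂ (T x) x : ℂ)) + ‖x‖ ^ 2 := by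
  have h1 : ‖T x‖ ^ 2 = re ((inner ℂ ((adjoint T * T) x) x : ℂ)) := (re_adjoint_mul T x).symm
  rw [hsa.adjoint_eq, hquad] at h1
  rw [h1, add_apply, inner_add_left, map_add, one_apply_eq_self, inner_self_eq_norm_sq]
  congr 1
  rw [smul_apply, inner_smul_left, Complex.conj_ofReal]
  simp [Complex.re_ofReal_mul]

theorem key_ineq (T : H →L[ℂ] H) (hsa : IsSelfAdjoint T) (a : ℝ) (ha : 0 < a)
    (hquad : T * T = ((a - a⁻¹ : ℝ) : ℂ) • T + 1) (x : H) :
    min (a ^ 2) (a ^ 2)⁻¹ * ‖x‖ ^ 2 ≤ ‖T x‖ ^ 2 ∧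
      ‖T x‖ ^ 2 ≤ max (a ^ 2) (a ^ 2)⁻¹ * ‖x‖ ^ 2 := by
  set u : ℝ := re ((inner ℂ (T x) x : ℂ)) with hu
  have hTx : ‖T x‖ ^ 2 = (a - a⁻¹) * u + ‖x‖ ^ 2 := norm_sq_T T hsa _ hquad x
  have key : ∀ t : ℝ, 0 ≤ ((a - a⁻¹) * u + ‖x‖ ^ 2) + 2 * t * u + t ^ 2 * ‖x‖ ^ 2 := by
    intro t
    have expand : ‖T x + t • x‖ ^ 2 = ‖T x‖ ^ 2 + 2 * (t * u) + t ^ 2 * ‖x‖ ^ 2 := by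
      rw [norm_add_sq (𝕜 := ℂ), RCLike.real_smul_eq_coe_smul (K := ℂ) t x,
        inner_smul_real_right]
      rw [RCLike.smul_re, norm_smul]
      simp [mul_pow, sq_abs, hu]
    have h0 : (0:ℝ) ≤ ‖T x + t • x‖ ^ 2 := sq_nonneg _
    rw [expand, hTx] at h0
    linarith
  have := real_key a (‖x‖ ^ 2) u ha key
  rw [hTx]
  exact this

theorem isPositive_real_smul {T : H →L[ℂ] H} (hT : T.IsPositive) (r : ℝ) (hr : 0 ≤ r) :
    (((r : ℝ) : ℂ) • T).IsPositive := by
  refine isPositive_def'.mpr ⟨IsSelfAdjoint.smul (by simp [IsSelfAdjoint]) hT.isSelfAdjoint, fun x => ?_⟩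
  have h : (((r : ℝ) : ℂ) • T).reApplyInnerSelf x = r * T.reApplyInnerSelf x := by
    simp only [reApplyInnerSelf, smul_apply, inner_smul_left, Complex.conj_ofReal]
    simp [Complex.re_ofReal_mul]
  rw [h]
  exact mul_nonneg hr (hT.2 x)

theorem sa_adjoint_mul_self (T : H →L[ℂ] H) : IsSelfAdjoint (adjoint T * T) := by
  have := IsSelfAdjoint.star_mul_self T
  rwa [star_eq_adjoint] at this

set_option maxHeartbeats 1000000 in
theorem single_op_bounds (T : H →L[ℂ] H) (hsa : IsSelfAdjoint T) (a : ℝ) (ha : 0 < a)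
    (hquad : T * T = ((a - a⁻¹ : ℝ) : ℂ) • T + 1) :
    (adjoint T * T - ((min (a ^ 2) (a ^ 2)⁻¹ : ℝ) : ℂ) • 1).IsPositive ∧
      (((max (a ^ 2) (a ^ 2)⁻¹ : ℝ) : ℂ) • 1 - adjoint T * T).IsPositive := by
  constructor
  · refine isPositive_def'.mpr ⟨(sa_adjoint_mul_self T).sub (sa_real_smul_one _), fun x => ?_⟩
    have h : (adjoint T * T - ((min (a ^ 2) (a ^ 2)⁻¹ : ℝ) : ℂ) • 1).reApplyInnerSelf x
        = ‖T x‖ ^ 2 - min (a ^ 2) (a ^ 2)⁻¹ * ‖x‖ ^ 2 := by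
      simp only [reApplyInnerSelf, sub_apply, inner_sub_left, map_sub,
        re_adjoint_mul, re_inner_smul_one]
    rw [h]
    linarith [(key_ineq T hsa a ha hquad x).1]
  · refine isPositive_def'.mpr ⟨(sa_real_smul_one _).sub (sa_adjoint_mul_self T), fun x => ?_⟩
    have h : (((max (a ^ 2) (a ^ 2)⁻¹ : ℝ) : ℂ) • 1 - adjoint T * T).reApplyInnerSelf x
        = max (a ^ 2) (a ^ 2)⁻¹ * ‖x‖ ^ 2 - ‖T x‖ ^ 2 := by
      simp only [reApplyInnerSelf, sub_apply, inner_sub_left, map_sub,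
        re_adjoint_mul, re_inner_smul_one]
    rw [h]
    linarith [(key_ineq T hsa a ha hquad x).2]

theorem prod_bounds {B : Type*} (Top : B → (H →L[ℂ] H)) (fmin fmax : B → ℝ)
    (h0 : ∀ b, 0 ≤ fmin b)
    (hb : ∀ b, (adjoint (Top b) * Top b - (((fmin b : ℝ) : ℂ)) • 1).IsPositive ∧
      ((((fmax b : ℝ) : ℂ)) • 1 - adjoint (Top b) * Top b).IsPositive)
    (h0' : ∀ b, 0 ≤ fmax b) :
    ∀ L : List B,
      (adjoint ((L.map Top).prod) * (L.map Top).prod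
          - (((L.map fmin).prod : ℝ) : ℂ) • 1).IsPositive ∧
        ((((L.map fmax).prod : ℝ) : ℂ) • 1
          - adjoint ((L.map Top).prod) * (L.map Top).prod).IsPositive := by
  intro L
  induction L with
  | nil =>
      simp only [List.map_nil, List.prod_nil]
      have h1 : adjoint (1 : H →L[ℂ] H) = 1 := by rw [← star_eq_adjoint, star_one]
      have e1 : adjoint (1 : H →L[ℂ] H) * 1 - (((1 : ℝ) : ℂ)) • 1 = 0 := by
        rw [h1]; norm_num
      have e2 : (((1 : ℝ) : ℂ)) • 1 - adjoint (1 : H →L[ℂ] H) * 1 = 0 := by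
        rw [h1]; norm_num
      rw [e1, e2]
      exact ⟨isPositive_zero, isPositive_zero⟩
  | cons b l ih =>
      simp only [List.map_cons, List.prod_cons]
      set T := Top b with hT
      set Q := (l.map Top).prod with hQ
      have hadj : adjoint (T * Q) = adjoint Q * adjoint T := by
        rw [← star_eq_adjoint, ← star_eq_adjoint, ← star_eq_adjoint, star_mul]
      constructor
      · have e : adjoint (T * Q) * (T * Q)
            - (((fmin b * (l.map fmin).prod : ℝ) : ℂ)) • 1
            = adjoint Q * ((adjoint T * T - ((fmin b : ℝ) : ℂ) • 1) * Q)
              + ((fmin b : ℝ) : ℂ) • (adjoint Q * Q - (((l.map fmin).prod : ℝ) : ℂ) • 1) := by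
          rw [hadj]
          simp only [mul_sub, sub_mul, smul_sub, smul_mul_assoc, mul_smul_comm, one_mul,
            smul_smul, Complex.ofReal_mul, mul_assoc]
          abel
        rw [e]
        have p1 : (adjoint Q * ((adjoint T * T - ((fmin b : ℝ) : ℂ) • 1) * Q)).IsPositive := by
          have := ((hb b).1).adjoint_conj Q
          simpa [mul_def] using this
        exact p1.add (isPositive_real_smul ih.1 _ (h0 b))
      · have e : (((fmax b * (l.map fmax).prod : ℝ) : ℂ)) • 1
            - adjoint (T * Q) * (T * Q)
            = adjoint Q * ((((fmax b : ℝ) : ℂ) • 1 - adjoint T * T) * Q)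
              + ((fmax b : ℝ) : ℂ) • ((((l.map fmax).prod : ℝ) : ℂ) • 1 - adjoint Q * Q) := by
          rw [hadj]
          simp only [mul_sub, sub_mul, smul_sub, smul_mul_assoc, mul_smul_comm, one_mul,
            smul_smul, Complex.ofReal_mul, mul_assoc]
          abel
        rw [e]
        have p1 : (adjoint Q * ((((fmax b : ℝ) : ℂ) • 1 - adjoint T * T) * Q)).IsPositive := by
          have := ((hb b).2).adjoint_conj Q
          simpa [mul_def] using this
        exact p1.add (isPositive_real_smul ih.2 _ (h0' b))

theorem list_prod_invertible {B A : Type*} [Monoid A] (f : B → A)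
    (h : ∀ b, ∃ v, f b * v = 1 ∧ v * f b = 1) :
    ∀ L : List B, ∃ V, (L.map f).prod * V = 1 ∧ V * (L.map f).prod = 1 := by
  intro L
  induction L with
  | nil => exact ⟨1, by simp, by simp⟩
  | cons b l ih =>
      obtain ⟨vb, hvb1, hvb2⟩ := h b
      obtain ⟨V, hV1, hV2⟩ := ih
      refine ⟨V * vb, ?_, ?_⟩
      · simp only [List.map_cons, List.prod_cons]
        calc f b * (l.map f).prod * (V * vb) = f b * ((l.map f).prod * V) * vb := by simp only [mul_assoc]
        _ = f b * vb := by rw [hV1, mul_one]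
        _ = 1 := hvb1
      · simp only [List.map_cons, List.prod_cons]
        calc V * vb * (f b * (l.map f).prod) = V * (vb * f b) * (l.map f).prod := by rw [mul_assoc, mul_assoc, mul_assoc]
        _ = V * (l.map f).prod := by rw [hvb2, mul_one]
        _ = 1 := hV2

theorem max_sqrt_sq (t : ℝ) (ht : 0 < t) :
    (max (Real.sqrt t) (Real.sqrt t)⁻¹) ^ 2 = max t t⁻¹ := by
  have hs : 0 < Real.sqrt t := Real.sqrt_pos.2 ht
  have h2 : Real.sqrt t ^ 2 = t := Real.sq_sqrt ht.le
  rcases le_total (Real.sqrt t) (Real.sqrt t)⁻¹ with h | h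
  · rw [max_eq_right h, max_eq_right, inv_pow, h2]
    rw [← h2, ← inv_pow]
    exact pow_le_pow_left₀ hs.le h 2
  · rw [max_eq_left h, max_eq_left, h2]
    rw [← h2, ← inv_pow]
    exact pow_le_pow_left₀ (by positivity) h 2

end Aux
theorem sq_le_imp (x y : ℝ) (hx : 0 ≤ x) (hy : 0 ≤ y) (h : x ^ 2 ≤ y ^ 2) : x ≤ y := by
  nlinarith

set_option maxHeartbeats 2000000 in
open ContinuousLinearMap RCLike in
/-- For a reduced expression `w = s₁⋯sₙ`, the Hecke operator `T_w^{(q)} = T_{s₁}⋯T_{sₙ}`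
on `ℓ²(W)` satisfies `∏ min(q_{sᵢ}, q_{sᵢ}⁻¹) ≤ (T_w)^* T_w ≤ ∏ max(q_{sᵢ}, q_{sᵢ}⁻¹)`;
in particular it is invertible and `‖T_w‖, ‖T_w⁻¹‖ ≤ ∏ max(q_{sᵢ}^{1/2}, q_{sᵢ}^{-1/2})`. -/
theorem stmt14 {B W : Type*} [Group W] [DecidableEq W] {M : CoxeterMatrix B}
    (cs : CoxeterSystem M W)
    (q : B → ℝ) (hq : ∀ b, 0 < q b)
    (Top : B → (lp (fun _ : W => ℂ) 2 →L[ℂ] lp (fun _ : W => ℂ) 2))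
    (hT1 : ∀ (b : B) (w : W), cs.length (cs.simple b * w) = cs.length w + 1 →
      Top b (lp.single 2 w (1 : ℂ)) = lp.single 2 (cs.simple b * w) (1 : ℂ))
    (hT2 : ∀ (b : B) (w : W), cs.length (cs.simple b * w) + 1 = cs.length w →
      Top b (lp.single 2 w (1 : ℂ)) = lp.single 2 (cs.simple b * w) (1 : ℂ) +
        (((Real.sqrt (q b))⁻¹ * (q b - 1) : ℝ) : ℂ) • lp.single 2 w (1 : ℂ))
    (ω : List B) (w : W) (hw : cs.wordProd ω = w) (hred : cs.IsReduced ω) :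
    (ContinuousLinearMap.adjoint ((ω.map Top).prod) * (ω.map Top).prod -
        (((ω.map (fun b => min (q b) (q b)⁻¹)).prod : ℂ) • 1)).IsPositive ∧
    ((((ω.map (fun b => max (q b) (q b)⁻¹)).prod : ℂ) • 1) -
        ContinuousLinearMap.adjoint ((ω.map Top).prod) * (ω.map Top).prod).IsPositive ∧
    ‖(ω.map Top).prod‖ ≤ (ω.map (fun b => max (Real.sqrt (q b)) (Real.sqrt (q b))⁻¹)).prod ∧
    ∃ Tinv : lp (fun _ : W => ℂ) 2 →L[ℂ] lp (fun _ : W => ℂ) 2,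
      (ω.map Top).prod * Tinv = 1 ∧ Tinv * (ω.map Top).prod = 1 ∧
      ‖Tinv‖ ≤ (ω.map (fun b => max (Real.sqrt (q b)) (Real.sqrt (q b))⁻¹)).prod := by
  classical
  -- per-letter self-adjointness and quadratic relation
  have perletter : ∀ b : B, IsSelfAdjoint (Top b) ∧
      Top b * Top b
        = ((Real.sqrt (q b) - (Real.sqrt (q b))⁻¹ : ℝ) : ℂ) • Top b + 1 := by
    intro b
    set a := Real.sqrt (q b) with haa
    have ha : 0 < a := Real.sqrt_pos.2 (hq b)
    have ha2 : a ^ 2 = q b := Real.sq_sqrt (hq b).le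
    have hpeq : (Real.sqrt (q b))⁻¹ * (q b - 1) = a - a⁻¹ := by
      rw [← haa, ← ha2]; field_simp
    have hT2' : ∀ v : W, cs.length (cs.simple b * v) + 1 = cs.length v →
        Top b (lp.single 2 v (1 : ℂ)) = lp.single 2 (cs.simple b * v) (1 : ℂ) +
          ((a - a⁻¹ : ℝ) : ℂ) • lp.single 2 v (1 : ℂ) := by
      intro v hv
      rw [← hpeq]; exact hT2 b v hv
    have hstepA : ∀ v : W, Top b (Top b (lp.single 2 v (1 : ℂ))) =
        ((a - a⁻¹ : ℝ) : ℂ) • Top b (lp.single 2 v (1 : ℂ)) + lp.single 2 v (1 : ℂ) := by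
      intro v
      rcases cs.length_simple_mul v b with hv | hv
      · rw [hT1 b v hv]
        have hlen : cs.length (cs.simple b * (cs.simple b * v)) + 1
            = cs.length (cs.simple b * v) := by
          rw [cs.simple_mul_simple_cancel_left]; omega
        rw [hT2' _ hlen, cs.simple_mul_simple_cancel_left]
        abel
      · rw [hT2' v hv, map_add, map_smul]
        have hlen : cs.length (cs.simple b * (cs.simple b * v))
            = cs.length (cs.simple b * v) + 1 := by
          rw [cs.simple_mul_simple_cancel_left]; omega
        rw [hT1 _ _ hlen, cs.simple_mul_simple_cancel_left, hT2' v hv]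
        abel
    have hiff : ∀ v u : W, (cs.simple b * v = u) ↔ (v = cs.simple b * u) := by
      intro v u
      constructor
      · rintro rfl; rw [cs.simple_mul_simple_cancel_left]
      · rintro rfl; rw [cs.simple_mul_simple_cancel_left]
    have hsym : ∀ v u : W,
        (inner ℂ (Top b (lp.single 2 v (1 : ℂ))) (lp.single 2 u (1 : ℂ)) : ℂ)
          = inner ℂ (lp.single 2 v (1 : ℂ)) (Top b (lp.single 2 u (1 : ℂ))) := by
      intro v u
      rcases cs.length_simple_mul v b with hv | hv <;>
        rcases cs.length_simple_mul u b with hu | hu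
      · rw [hT1 b v hv, hT1 b u hu, inner_delta, inner_delta]
        by_cases h : cs.simple b * v = u
        · rw [if_pos h, if_pos ((hiff v u).1 h)]
        · rw [if_neg h, if_neg (fun hh => h ((hiff v u).2 hh))]
      · rw [hT1 b v hv, hT2' u hu]
        simp only [inner_add_right, inner_smul_right, inner_delta, Complex.conj_ofReal]
        have hne : v ≠ u := by rintro rfl; omega
        rw [if_neg hne, mul_zero, add_zero]
        by_cases h : cs.simple b * v = u
        · rw [if_pos h, if_pos ((hiff v u).1 h)]
        · rw [if_neg h, if_neg (fun hh => h ((hiff v u).2 hh))]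
      · rw [hT2' v hv, hT1 b u hu]
        simp only [inner_add_left, inner_smul_left, inner_delta, Complex.conj_ofReal]
        have hne : v ≠ u := by rintro rfl; omega
        rw [if_neg hne, mul_zero, add_zero]
        by_cases h : cs.simple b * v = u
        · rw [if_pos h, if_pos ((hiff v u).1 h)]
        · rw [if_neg h, if_neg (fun hh => h ((hiff v u).2 hh))]
      · rw [hT2' v hv, hT2' u hu]
        simp only [inner_add_left, inner_add_right, inner_smul_left, inner_smul_right,
          inner_delta, Complex.conj_ofReal]
        by_cases h : cs.simple b * v = u
        · rw [if_pos h, if_pos ((hiff v u).1 h)]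
        · rw [if_neg h, if_neg (fun hh => h ((hiff v u).2 hh))]
    have hadjeq : adjoint (Top b) = Top b := by
      apply clm_ext_singles
      intro v
      apply ext_inner_right ℂ
      intro y
      rw [adjoint_inner_left]
      have hAB : (innerSL ℂ (lp.single 2 v (1 : ℂ))).comp (Top b)
          = innerSL ℂ (Top b (lp.single 2 v (1 : ℂ))) := by
        apply clm_ext_singles
        intro u
        simp only [ContinuousLinearMap.comp_apply, innerSL_apply_apply]
        exact (hsym v u).symm
      have h := ContinuousLinearMap.ext_iff.1 hAB y
      simpa using h
    refine ⟨isSelfAdjoint_iff'.mpr hadjeq, ?_⟩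
    apply clm_ext_singles
    intro v
    rw [mul_apply_eq_comp, add_apply, smul_apply, one_apply_eq_self]
    exact hstepA v
  have hbounds : ∀ b : B,
      (adjoint (Top b) * Top b - ((min (q b) (q b)⁻¹ : ℝ) : ℂ) • 1).IsPositive ∧
      (((max (q b) (q b)⁻¹ : ℝ) : ℂ) • 1 - adjoint (Top b) * Top b).IsPositive := by
    intro b
    have ha : 0 < Real.sqrt (q b) := Real.sqrt_pos.2 (hq b)
    have ha2 : Real.sqrt (q b) ^ 2 = q b := Real.sq_sqrt (hq b).le
    have h := single_op_bounds (Top b) (perletter b).1 _ ha (perletter b).2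
    rwa [ha2] at h
  have hmin0 : ∀ b : B, 0 ≤ min (q b) (q b)⁻¹ := fun b =>
    (lt_min (hq b) (inv_pos.2 (hq b))).le
  have hmax0 : ∀ b : B, 0 ≤ max (q b) (q b)⁻¹ := fun b =>
    le_trans (hq b).le (le_max_left _ _)
  have hPB := prod_bounds Top _ _ hmin0 hbounds hmax0 ω
  set P := (ω.map Top).prod with hP
  set C := (ω.map (fun b => max (Real.sqrt (q b)) (Real.sqrt (q b))⁻¹)).prod with hC
  have hC0 : 0 ≤ C := by
    apply List.prod_nonneg
    intro x hx
    simp only [List.mem_map] at hx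
    obtain ⟨b, _, rfl⟩ := hx
    exact le_trans (Real.sqrt_nonneg _) (le_max_left _ _)
  have hC2all : ∀ L : List B,
      ((L.map (fun b => max (Real.sqrt (q b)) (Real.sqrt (q b))⁻¹)).prod) ^ 2
        = (L.map (fun b => max (q b) (q b)⁻¹)).prod := by
    intro L
    induction L with
    | nil => simp
    | cons b l ih =>
        simp only [List.map_cons, List.prod_cons, mul_pow, ih, max_sqrt_sq (q b) (hq b)]
  have hmc : ∀ L : List B,
      (L.map (fun b => min (q b) (q b)⁻¹)).prod *
        ((L.map (fun b => max (Real.sqrt (q b)) (Real.sqrt (q b))⁻¹)).prod) ^ 2 = 1 := by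
    intro L
    induction L with
    | nil => simp
    | cons b l ih =>
        simp only [List.map_cons, List.prod_cons, mul_pow]
        have h1 : min (q b) (q b)⁻¹ * (max (Real.sqrt (q b)) (Real.sqrt (q b))⁻¹) ^ 2 = 1 := by
          rw [max_sqrt_sq (q b) (hq b), min_mul_max, mul_inv_cancel₀ (hq b).ne']
        calc (min (q b) (q b)⁻¹ * (l.map (fun b => min (q b) (q b)⁻¹)).prod) *
              ((max (Real.sqrt (q b)) (Real.sqrt (q b))⁻¹) ^ 2 *
                ((l.map (fun b => max (Real.sqrt (q b)) (Real.sqrt (q b))⁻¹)).prod) ^ 2)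
            = (min (q b) (q b)⁻¹ * (max (Real.sqrt (q b)) (Real.sqrt (q b))⁻¹) ^ 2) *
              ((l.map (fun b => min (q b) (q b)⁻¹)).prod *
                ((l.map (fun b => max (Real.sqrt (q b)) (Real.sqrt (q b))⁻¹)).prod) ^ 2) := by
              ring
          _ = 1 := by rw [h1, ih, one_mul]
  refine ⟨hPB.1, hPB.2, ?_, ?_⟩
  · -- norm bound for P
    refine opNorm_le_bound _ hC0 fun x => ?_
    have h := hPB.2.2 x
    have e : ((((ω.map (fun b => max (q b) (q b)⁻¹)).prod : ℝ) : ℂ) • 1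
          - adjoint P * P).reApplyInnerSelf x
        = (ω.map (fun b => max (q b) (q b)⁻¹)).prod * ‖x‖ ^ 2 - ‖P x‖ ^ 2 := by
      simp only [reApplyInnerSelf, sub_apply, inner_sub_left, map_sub,
        re_adjoint_mul, re_inner_smul_one]
    rw [e] at h
    apply sq_le_imp _ _ (norm_nonneg _) (mul_nonneg hC0 (norm_nonneg _))
    have := hC2all ω
    rw [← hC] at this
    nlinarith [this]
  · -- inverse
    have hinvall : ∀ b : B, ∃ v, Top b * v = 1 ∧ v * Top b = 1 := by
      intro b
      refine ⟨Top b - ((Real.sqrt (q b) - (Real.sqrt (q b))⁻¹ : ℝ) : ℂ) • 1, ?_, ?_⟩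
      · rw [mul_sub, mul_smul_comm, mul_one, (perletter b).2]
        abel
      · rw [sub_mul, smul_mul_assoc, one_mul, (perletter b).2]
        abel
    obtain ⟨V, hV1, hV2⟩ := list_prod_invertible Top hinvall ω
    refine ⟨V, hV1, hV2, ?_⟩
    refine opNorm_le_bound _ hC0 fun x => ?_
    have h := hPB.1.2 (V x)
    have e : (adjoint P * P
          - (((ω.map (fun b => min (q b) (q b)⁻¹)).prod : ℝ) : ℂ) • 1).reApplyInnerSelf (V x)
        = ‖P (V x)‖ ^ 2 - (ω.map (fun b => min (q b) (q b)⁻¹)).prod * ‖V x‖ ^ 2 := by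
      simp only [reApplyInnerSelf, sub_apply, inner_sub_left, map_sub,
        re_adjoint_mul, re_inner_smul_one]
    rw [e] at h
    have hPV : P (V x) = x := by
      rw [← mul_apply_eq_comp, hV1, one_apply_eq_self]
    rw [hPV] at h
    -- h : 0 ≤ ‖x‖^2 - m * ‖V x‖^2
    apply sq_le_imp _ _ (norm_nonneg _) (mul_nonneg hC0 (norm_nonneg _))
    have hm := hmc ω
    rw [← hC] at hm
    nlinarith [sq_nonneg C, sq_nonneg (‖V x‖), norm_nonneg (V x),
      mul_le_mul_of_nonneg_left h (sq_nonneg C)]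
end
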